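/- arXiv:2204.08537 — 5 statements merged into one kernel-verified Lean document; each statement's English description precedes it below -/
import Mathlib

section
/- If a family F of subsets of an n-element set V has VC-dimension at most k, then any δ-separated subfamily of F (i.e., any subfamily in which every two distinct sets have symmetric difference of size greater than δ) has size at most c₁(n/δ)^k for some constant c₁ depending only on k. -/
/-!
Chazelle's averaging argument. Weight each trace `B` of `𝒳` on a set `S` by the number of
members of `𝒳` with trace `B`, and give the edge `{C, insert u C}` of the unit-distance graph on
the subsets of `S` the smaller weight of its two ends. If `𝒳` has VC-dimension at most `k`, the
total edge weight is at most `k * #𝒳`: induct on `S`, splitting the weights along a point `t`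
into their maximum and minimum over `{C, insert t C}`; the support of the minimum has smaller
VC-dimension. Conversely, if `S = insert y S'`, the members of `𝒳` with a common trace on `S'`
pairwise differ in more than `δ` points outside `S'`, so the edges in the directions `y ∉ S'`
weigh at least `(#𝒳 - #(traces on S')) δ / 2 ≥ (#𝒳 - (r + 1) ^ k) δ / 2` by Sauer–Shelah, where
`#S' = r`. Averaging both bounds over all `S'` gives `#𝒳 ≤ 2 (r + 1) ^ k` once `r + 1 ≥ 4kn/δ`;
for `δ` of order `k` Sauer–Shelah alone suffices.
-/

open Finset

namespace Finset

variable {α : Type*} [DecidableEq α]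

lemma vcDim_le_iff {𝒜 : Finset (Finset α)} {d : ℕ} :
    𝒜.vcDim ≤ d ↔ ∀ ⦃s⦄, 𝒜.Shatters s → #s ≤ d := by
  simp [vcDim, Finset.sup_le_iff]

lemma Shatters.of_image_inter {𝒜 : Finset (Finset α)} {s t : Finset α}
    (h : (𝒜.image (· ∩ s)).Shatters t) : 𝒜.Shatters t := by
  obtain ⟨u, hu, htu⟩ := h.exists_superset
  obtain ⟨A, -, rfl⟩ := mem_image.1 hu
  have hts : t ⊆ s := htu.trans inter_subset_right
  intro v hv
  obtain ⟨B, hB, hBv⟩ := h hv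
  obtain ⟨A, hA, rfl⟩ := mem_image.1 hB
  exact ⟨A, hA, by rw [← hBv, ← inter_assoc, inter_eq_left.2 (inter_subset_left.trans hts)]⟩

lemma vcDim_image_inter_le (𝒜 : Finset (Finset α)) (s : Finset α) :
    (𝒜.image (· ∩ s)).vcDim ≤ 𝒜.vcDim :=
  vcDim_le_iff.2 fun _ ht ↦ (Shatters.of_image_inter ht).card_le_vcDim

lemma sum_choose_le_succ_pow (n k : ℕ) : ∑ i ∈ range (k + 1), n.choose i ≤ (n + 1) ^ k := by
  rw [add_pow]
  gcongr with i hi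
  simpa using (Nat.choose_le_pow n i).trans
    (Nat.le_mul_of_pos_right _ (Nat.choose_pos (by simpa [Nat.lt_succ_iff] using hi)))

lemma card_image_inter_le {𝒜 : Finset (Finset α)} {k : ℕ} (h𝒜 : 𝒜.vcDim ≤ k) (s : Finset α) :
    #(𝒜.image (· ∩ s)) ≤ (#s + 1) ^ k := by
  have hsub : (𝒜.image (· ∩ s)).shatterer ⊆ (range (k + 1)).biUnion (s.powersetCard ·) := by
    intro t ht
    obtain ⟨u, hu, htu⟩ := (mem_shatterer.1 ht).exists_superset
    obtain ⟨A, -, rfl⟩ := mem_image.1 hu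
    have hcard := (vcDim_image_inter_le 𝒜 s).trans h𝒜
    simpa [Nat.lt_succ_iff, htu.trans inter_subset_right] using
      vcDim_le_iff.1 hcard (mem_shatterer.1 ht)
  calc #(𝒜.image (· ∩ s)) ≤ #(𝒜.image (· ∩ s)).shatterer := card_le_card_shatterer _
    _ ≤ ∑ i ∈ range (k + 1), #(s.powersetCard i) := (card_le_card hsub).trans card_biUnion_le
    _ ≤ (#s + 1) ^ k := by simpa using sum_choose_le_succ_pow #s k

def edgeWeightAt (T : Finset α) (w : Finset α → ℕ) (u : α) : ℕ :=
  ∑ C ∈ (T.erase u).powerset, min (w C) (w (insert u C))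

def edgeWeight (T : Finset α) (w : Finset α → ℕ) : ℕ :=
  ∑ u ∈ T, edgeWeightAt T w u

section Split

variable {T : Finset α} {t : α} (w : Finset α → ℕ)

lemma sum_powerset_insert_eq_sum_max_add_sum_min (ht : t ∉ T) :
    ∑ B ∈ (insert t T).powerset, w B =
      ∑ C ∈ T.powerset, max (w C) (w (insert t C)) +
        ∑ C ∈ T.powerset, min (w C) (w (insert t C)) := by
  rw [sum_powerset_insert ht, ← sum_add_distrib, ← sum_add_distrib]
  exact sum_congr rfl fun C _ ↦ (max_add_min _ _).symm

lemma edgeWeight_insert_le (ht : t ∉ T) :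
    edgeWeight (insert t T) w ≤
      ∑ C ∈ T.powerset, min (w C) (w (insert t C)) +
        (edgeWeight T (fun C ↦ max (w C) (w (insert t C))) +
          edgeWeight T (fun C ↦ min (w C) (w (insert t C)))) := by
  rw [edgeWeight, sum_insert ht, edgeWeightAt, erase_insert ht]
  gcongr
  rw [edgeWeight, edgeWeight, ← sum_add_distrib]
  refine sum_le_sum fun u hu ↦ ?_
  have htu : t ∉ T.erase u := fun h ↦ ht (mem_of_mem_erase h)
  rw [edgeWeightAt, edgeWeightAt, edgeWeightAt,
    erase_insert_of_ne (ne_of_mem_of_not_mem hu ht).symm, sum_powerset_insert htu, ← sum_add_distrib, ← sum_add_distrib]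
  refine sum_le_sum fun C _ ↦ ?_
  rw [insert_comm u t C]
  -- `min a b + min c d ≤ min (max a c) (max b d) + min (min a c) (min b d)`
  omega

lemma vcDim_support_max_le (ht : t ∉ T) :
    {C ∈ T.powerset | max (w C) (w (insert t C)) ≠ 0}.vcDim ≤
      {B ∈ (insert t T).powerset | w B ≠ 0}.vcDim := by
  refine vcDim_le_iff.2 fun X hX ↦ Shatters.card_le_vcDim fun Y hY ↦ ?_
  obtain ⟨D, hD, hXD⟩ := hX.exists_superset
  have htX : t ∉ X := fun h ↦ ht (mem_powerset.1 (mem_filter.1 hD).1 (hXD h))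
  obtain ⟨C, hC, rfl⟩ := hX hY
  simp only [mem_filter, mem_powerset] at hC ⊢
  by_cases hwC : w C = 0
  · exact ⟨insert t C, ⟨insert_subset_insert t hC.1, by omega⟩, inter_insert_of_notMem htX⟩
  · exact ⟨C, ⟨hC.1.trans (subset_insert t T), hwC⟩, rfl⟩

lemma card_lt_vcDim_of_shatters_support_min (ht : t ∉ T) {X : Finset α}
    (hX : {C ∈ T.powerset | min (w C) (w (insert t C)) ≠ 0}.Shatters X) :
    #X < {B ∈ (insert t T).powerset | w B ≠ 0}.vcDim := by
  obtain ⟨D, hD, hXD⟩ := hX.exists_superset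
  have htX : t ∉ X := fun h ↦ ht (mem_powerset.1 (mem_filter.1 hD).1 (hXD h))
  refine (card_lt_card (ssubset_insert htX)).trans_le (Shatters.card_le_vcDim fun Y hY ↦ ?_)
  obtain ⟨C, hC, hXC⟩ := hX (show Y.erase t ⊆ X from fun y hy ↦ by grind)
  simp only [mem_filter, mem_powerset] at hC ⊢
  have htC : t ∉ C := fun h ↦ ht (hC.1 h)
  by_cases htY : t ∈ Y
  · refine ⟨insert t C, ⟨insert_subset_insert t hC.1, by omega⟩, ?_⟩
    rw [← insert_inter_distrib, hXC, insert_erase htY]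
  · refine ⟨C, ⟨hC.1.trans (subset_insert t T), by omega⟩, ?_⟩
    rw [insert_inter_of_notMem htC, hXC, erase_eq_of_notMem htY]

end Split

lemma edgeWeight_le (T : Finset α) (w : Finset α → ℕ) (d : ℕ)
    (hd : {B ∈ T.powerset | w B ≠ 0}.vcDim ≤ d) :
    edgeWeight T w ≤ d * ∑ B ∈ T.powerset, w B := by
  induction T using Finset.induction_on generalizing w d with
  | empty => simp [edgeWeight]
  | @insert t T ht ih =>
    set wmax : Finset α → ℕ := fun C ↦ max (w C) (w (insert t C))
    set wmin : Finset α → ℕ := fun C ↦ min (w C) (w (insert t C))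
    have hmax := ih wmax d ((vcDim_support_max_le w ht).trans hd)
    have hmin := ih wmin (d - 1) <| vcDim_le_iff.2 fun X hX ↦ by
      have := card_lt_vcDim_of_shatters_support_min w ht hX
      omega
    have hmin_zero : d = 0 → ∑ C ∈ T.powerset, wmin C = 0 := fun hd0 ↦
      sum_eq_zero fun C hC ↦ by
        by_contra hC0
        have := card_lt_vcDim_of_shatters_support_min w ht
          (shatters_empty.2 ⟨C, mem_filter.2 ⟨hC, hC0⟩⟩)
        omega
    calc edgeWeight (insert t T) w
        ≤ ∑ C ∈ T.powerset, wmin C + (edgeWeight T wmax + edgeWeight T wmin) :=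
          edgeWeight_insert_le w ht
      _ ≤ d * (∑ C ∈ T.powerset, wmax C + ∑ C ∈ T.powerset, wmin C) := by
          obtain _ | e := d
          · simp only [hmin_zero rfl, Nat.zero_sub, zero_mul] at hmax hmin ⊢
            omega
          · rw [Nat.add_sub_cancel] at hmin
            linarith
      _ = d * ∑ B ∈ (insert t T).powerset, w B := by
          rw [sum_powerset_insert_eq_sum_max_add_sum_min w ht]

section Separated

variable {K : Finset (Finset α)} {U : Finset α} {δ : ℝ}

lemma sum_card_filter_notMem_mul_card_filter_mem (hU : ∀ A ∈ K, ∀ B ∈ K, B \ A ⊆ U) :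
    ∑ y ∈ U, #{A ∈ K | y ∉ A} * #{A ∈ K | y ∈ A} = ∑ A ∈ K, ∑ B ∈ K, #(B \ A) := by
  calc ∑ y ∈ U, #{A ∈ K | y ∉ A} * #{A ∈ K | y ∈ A}
      = ∑ y ∈ U, ∑ A ∈ K, ∑ B ∈ K, if y ∈ B \ A then 1 else 0 := by
        refine sum_congr rfl fun y _ ↦ ?_
        simp only [card_filter, sum_mul_sum, mem_sdiff, ite_zero_mul_ite_zero, mul_one, and_comm]
    _ = ∑ A ∈ K, ∑ B ∈ K, #{y ∈ U | y ∈ B \ A} := by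
        rw [sum_comm]
        refine sum_congr rfl fun A _ ↦ ?_
        rw [sum_comm]
        simp only [card_filter]
    _ = ∑ A ∈ K, ∑ B ∈ K, #(B \ A) := by
        refine sum_congr rfl fun A hA ↦ sum_congr rfl fun B hB ↦ ?_
        rw [filter_mem_eq_inter, inter_eq_right.2 (hU A hA B hB)]

lemma card_mul_card_sub_one_mul_le
    (hK : ∀ A ∈ K, ∀ B ∈ K, A ≠ B → δ < #(symmDiff A B)) :
    (#K : ℝ) * (#K - 1) * δ ≤ 2 * ∑ A ∈ K, ∑ B ∈ K, (#(B \ A) : ℝ) := by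
  have hsymm : ∀ A B : Finset α, (#(symmDiff A B) : ℝ) = #(A \ B) + #(B \ A) := fun A B ↦ by
    rw [symmDiff_def, sup_eq_union, card_union_of_disjoint disjoint_sdiff_sdiff, Nat.cast_add]
  have hrow : ∀ A ∈ K, ((#K : ℝ) - 1) * δ ≤ ∑ B ∈ K, (#(symmDiff A B) : ℝ) := fun A hA ↦
    calc ((#K : ℝ) - 1) * δ = ∑ _B ∈ K.erase A, δ := by
          rw [sum_const, card_erase_of_mem hA, nsmul_eq_mul,
            Nat.cast_sub (card_pos.2 ⟨A, hA⟩), Nat.cast_one]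
      _ ≤ ∑ B ∈ K.erase A, (#(symmDiff A B) : ℝ) := sum_le_sum fun B hB ↦
          (hK A hA B (mem_of_mem_erase hB) (ne_of_mem_erase hB).symm).le
      _ ≤ ∑ B ∈ K, (#(symmDiff A B) : ℝ) :=
          sum_le_sum_of_subset_of_nonneg (erase_subset _ _) fun _ _ _ ↦ by positivity
  calc (#K : ℝ) * (#K - 1) * δ = ∑ _A ∈ K, ((#K : ℝ) - 1) * δ := by
        rw [sum_const, nsmul_eq_mul, mul_assoc]
    _ ≤ ∑ A ∈ K, ∑ B ∈ K, (#(symmDiff A B) : ℝ) := sum_le_sum hrow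
    _ = 2 * ∑ A ∈ K, ∑ B ∈ K, (#(B \ A) : ℝ) := by
        simp only [hsymm, sum_add_distrib]
        rw [sum_comm (f := fun A B ↦ (#(A \ B) : ℝ))]
        ring

lemma card_sub_one_mul_le_sum_min (hδ : 0 ≤ δ) (hU : ∀ A ∈ K, ∀ B ∈ K, B \ A ⊆ U)
    (hK : ∀ A ∈ K, ∀ B ∈ K, A ≠ B → δ < #(symmDiff A B)) :
    ((#K : ℝ) - 1) * δ ≤ 2 * ((∑ y ∈ U, min #{A ∈ K | y ∉ A} #{A ∈ K | y ∈ A} : ℕ) : ℝ) := by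
  rcases K.eq_empty_or_nonempty with rfl | hne
  · simpa using hδ
  have hprod : ∀ y, #{A ∈ K | y ∉ A} * #{A ∈ K | y ∈ A} ≤
      #K * min #{A ∈ K | y ∉ A} #{A ∈ K | y ∈ A} := fun y ↦ by
    rw [← card_filter_add_card_filter_not (s := K) (fun A ↦ y ∉ A)]
    simp only [not_not]
    rcases le_total #{A ∈ K | y ∉ A} #{A ∈ K | y ∈ A} with h | h
    · rw [min_eq_left h]; nlinarith
    · rw [min_eq_right h]; nlinarith
  have hmain : (#K : ℝ) * (((#K : ℝ) - 1) * δ) ≤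
      (#K : ℝ) * (2 * ((∑ y ∈ U, min #{A ∈ K | y ∉ A} #{A ∈ K | y ∈ A} : ℕ) : ℝ)) := by
    calc (#K : ℝ) * (((#K : ℝ) - 1) * δ) ≤ 2 * ∑ A ∈ K, ∑ B ∈ K, (#(B \ A) : ℝ) := by
          rw [← mul_assoc]; exact card_mul_card_sub_one_mul_le hK
      _ = 2 * ((∑ y ∈ U, #{A ∈ K | y ∉ A} * #{A ∈ K | y ∈ A} : ℕ) : ℝ) := by
          rw [sum_card_filter_notMem_mul_card_filter_mem hU]; push_cast; rfl
      _ ≤ 2 * ((∑ y ∈ U, #K * min #{A ∈ K | y ∉ A} #{A ∈ K | y ∈ A} : ℕ) : ℝ) := by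
          gcongr 2 * (Nat.cast ?_)
          exact sum_le_sum fun y _ ↦ hprod y
      _ = _ := by rw [← mul_sum]; push_cast; ring
  exact le_of_mul_le_mul_left hmain (by simpa using hne)

end Separated

def traceCount (𝒜 : Finset (Finset α)) (S B : Finset α) : ℕ := #{A ∈ 𝒜 | A ∩ S = B}

section Trace

variable (𝒜 : Finset (Finset α)) {S C : Finset α} {y : α}

lemma traceCount_insert (hy : y ∉ S) (hC : C ⊆ S) :
    traceCount 𝒜 (insert y S) C = #{A ∈ {A ∈ 𝒜 | A ∩ S = C} | y ∉ A} := by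
  rw [traceCount, filter_filter]
  congr 1
  refine filter_congr fun A _ ↦ ?_
  by_cases hyA : y ∈ A
  · rw [inter_insert_of_mem hyA]
    simp only [hyA, not_true_eq_false, and_false, iff_false]
    exact fun h ↦ hy (hC (h ▸ mem_insert_self y _))
  · rw [inter_insert_of_notMem hyA]
    simp [hyA]

lemma traceCount_insert_insert (hy : y ∉ S) (hC : C ⊆ S) :
    traceCount 𝒜 (insert y S) (insert y C) = #{A ∈ {A ∈ 𝒜 | A ∩ S = C} | y ∈ A} := by
  rw [traceCount, filter_filter]
  congr 1
  refine filter_congr fun A _ ↦ ?_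
  by_cases hyA : y ∈ A
  · rw [inter_insert_of_mem hyA]
    simp only [hyA, and_true]
    constructor
    · intro h
      rw [← erase_insert (fun h ↦ hy (mem_inter.1 h).2 : y ∉ A ∩ S), h,
        erase_insert (fun h ↦ hy (hC h))]
    · rintro rfl; rfl
  · rw [inter_insert_of_notMem hyA]
    simp only [hyA, and_false, iff_false]
    exact fun h ↦ hy (inter_subset_right (h ▸ mem_insert_self y C : y ∈ A ∩ S))

lemma card_sub_card_image_inter_mul_le [Fintype α] {δ : ℝ} (hδ : 0 ≤ δ)
    (h𝒜 : ∀ A ∈ 𝒜, ∀ B ∈ 𝒜, A ≠ B → δ < #(symmDiff A B)) (S : Finset α) :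
    ((#𝒜 : ℝ) - #(𝒜.image (· ∩ S))) * δ ≤
      2 * ((∑ y ∈ Sᶜ, edgeWeightAt (insert y S) (traceCount 𝒜 (insert y S)) y : ℕ) : ℝ) := by
  set m : Finset α → α → ℕ := fun C y ↦
    min (traceCount 𝒜 (insert y S) C) (traceCount 𝒜 (insert y S) (insert y C))
  have hclass : ∀ C ∈ 𝒜.image (· ∩ S),
      ((#{A ∈ 𝒜 | A ∩ S = C} : ℝ) - 1) * δ ≤ 2 * ((∑ y ∈ Sᶜ, m C y : ℕ) : ℝ) := fun C hC ↦ by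
    have hCS : C ⊆ S := by obtain ⟨A, -, rfl⟩ := mem_image.1 hC; exact inter_subset_right
    have hU : ∀ A ∈ {A ∈ 𝒜 | A ∩ S = C}, ∀ B ∈ {A ∈ 𝒜 | A ∩ S = C}, B \ A ⊆ Sᶜ := by
      intro A hA B hB y hy
      simp only [mem_filter] at hA hB
      rw [mem_compl]
      intro hyS
      have : y ∈ B ∩ S := mem_inter.2 ⟨(mem_sdiff.1 hy).1, hyS⟩
      rw [hB.2, ← hA.2] at this
      exact (mem_sdiff.1 hy).2 (mem_inter.1 this).1
    convert card_sub_one_mul_le_sum_min hδ hU (fun A hA B hB ↦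
      h𝒜 A (mem_filter.1 hA).1 B (mem_filter.1 hB).1) using 4 with y hy
    rw [← traceCount_insert 𝒜 (mem_compl.1 hy) hCS,
      ← traceCount_insert_insert 𝒜 (mem_compl.1 hy) hCS]
  calc ((#𝒜 : ℝ) - #(𝒜.image (· ∩ S))) * δ
      = ∑ C ∈ 𝒜.image (· ∩ S), ((#{A ∈ 𝒜 | A ∩ S = C} : ℝ) - 1) * δ := by
        rw [← sum_mul, sum_sub_distrib, ← Nat.cast_sum, ← card_eq_sum_card_image]
        simp
    _ ≤ ∑ C ∈ 𝒜.image (· ∩ S), 2 * ((∑ y ∈ Sᶜ, m C y : ℕ) : ℝ) := sum_le_sum hclass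
    _ = 2 * ((∑ y ∈ Sᶜ, ∑ C ∈ 𝒜.image (· ∩ S), m C y : ℕ) : ℝ) := by
        rw [sum_comm, ← mul_sum]; push_cast; rfl
    _ ≤ 2 * ((∑ y ∈ Sᶜ, ∑ C ∈ S.powerset, m C y : ℕ) : ℝ) := by
        gcongr 2 * (Nat.cast ?_)
        refine sum_le_sum fun y _ ↦ sum_le_sum_of_subset fun C hC ↦ ?_
        obtain ⟨A, -, rfl⟩ := mem_image.1 hC
        exact mem_powerset.2 inter_subset_right
    _ = 2 * ((∑ y ∈ Sᶜ, edgeWeightAt (insert y S) (traceCount 𝒜 (insert y S)) y : ℕ) : ℝ) := by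
        congr 2
        exact sum_congr rfl fun y hy ↦ by rw [edgeWeightAt, erase_insert (mem_compl.1 hy)]

lemma edgeWeight_traceCount_le {k : ℕ} (h𝒜 : 𝒜.vcDim ≤ k) (S : Finset α) :
    edgeWeight S (traceCount 𝒜 S) ≤ k * #𝒜 := by
  have hsupp : {B ∈ S.powerset | traceCount 𝒜 S B ≠ 0} ⊆ 𝒜.image (· ∩ S) := fun B hB ↦ by
    obtain ⟨A, hA⟩ := card_pos.1 (Nat.pos_of_ne_zero (mem_filter.1 hB).2)
    exact mem_image.2 ⟨A, (mem_filter.1 hA).1, (mem_filter.1 hA).2⟩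
  have htotal : ∑ B ∈ S.powerset, traceCount 𝒜 S B = #𝒜 :=
    (card_eq_sum_card_fiberwise fun A _ ↦ mem_powerset.2 inter_subset_right).symm
  simpa [htotal] using
    edgeWeight_le S _ k ((vcDim_mono hsupp).trans ((vcDim_image_inter_le 𝒜 S).trans h𝒜))

end Trace

lemma sum_powersetCard_sum_compl_insert [Fintype α] {β : Type*} [AddCommMonoid β] (r : ℕ)
    (f : Finset α → α → β) :
    ∑ s ∈ powersetCard r univ, ∑ a ∈ sᶜ, f (insert a s) a =
      ∑ s ∈ powersetCard (r + 1) univ, ∑ a ∈ s, f s a := by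
  rw [sum_sigma', sum_sigma']
  refine sum_nbij' (fun p ↦ ⟨insert p.2 p.1, p.2⟩) (fun p ↦ ⟨p.1.erase p.2, p.2⟩) ?_ ?_ ?_ ?_ ?_
  · simp only [mem_sigma, mem_powersetCard_univ, mem_compl, and_imp, Sigma.forall]
    intro s a hs ha
    exact ⟨by rw [card_insert_of_notMem ha, hs], mem_insert_self a s⟩
  · simp only [mem_sigma, mem_powersetCard_univ, mem_compl, and_imp, Sigma.forall]
    intro s a hs ha
    exact ⟨by rw [card_erase_of_mem ha, hs, Nat.add_sub_cancel], notMem_erase a s⟩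
  · simp +contextual
  · simp +contextual [insert_erase]
  · simp +contextual

section Packing

variable [Fintype α] {𝒜 : Finset (Finset α)} {k : ℕ} {δ : ℝ}

lemma choose_mul_sub_pow_mul_le (hδ : 0 ≤ δ) (h𝒜 : 𝒜.vcDim ≤ k)
    (hsep : ∀ A ∈ 𝒜, ∀ B ∈ 𝒜, A ≠ B → δ < #(symmDiff A B)) (r : ℕ) :
    ((Fintype.card α).choose r : ℝ) * ((#𝒜 - (r + 1) ^ k) * δ) ≤
      2 * ((Fintype.card α).choose (r + 1) * (k * #𝒜)) := by
  calc ((Fintype.card α).choose r : ℝ) * ((#𝒜 - (r + 1) ^ k) * δ)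
      = ∑ _S ∈ powersetCard r univ, ((#𝒜 : ℝ) - (r + 1) ^ k) * δ := by
        rw [sum_const, card_powersetCard, card_univ, nsmul_eq_mul]
    _ ≤ ∑ S ∈ powersetCard r univ,
          2 * ((∑ y ∈ Sᶜ, edgeWeightAt (insert y S) (traceCount 𝒜 (insert y S)) y : ℕ) : ℝ) :=
        sum_le_sum fun S hS ↦ by
          refine le_trans ?_ (card_sub_card_image_inter_mul_le 𝒜 hδ hsep S)
          have htrace := card_image_inter_le h𝒜 S
          rw [(mem_powersetCard_univ.1 hS)] at htrace
          gcongr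
          exact_mod_cast htrace
    _ = 2 * ((∑ S ∈ powersetCard (r + 1) univ, edgeWeight S (traceCount 𝒜 S) : ℕ) : ℝ) := by
        rw [← mul_sum, ← Nat.cast_sum,
          sum_powersetCard_sum_compl_insert r fun S y ↦ edgeWeightAt S (traceCount 𝒜 S) y]
        rfl
    _ ≤ 2 * ((∑ _S ∈ powersetCard (r + 1) univ, k * #𝒜 : ℕ) : ℝ) := by
        gcongr 2 * (Nat.cast ?_)
        exact sum_le_sum fun S _ ↦ edgeWeight_traceCount_le 𝒜 h𝒜 S
    _ = 2 * ((Fintype.card α).choose (r + 1) * (k * #𝒜)) := by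
        rw [sum_const, card_powersetCard, card_univ, smul_eq_mul]
        push_cast
        ring

lemma card_le_two_mul_pow (hδ : 0 < δ) (h𝒜 : 𝒜.vcDim ≤ k)
    (hsep : ∀ A ∈ 𝒜, ∀ B ∈ 𝒜, A ≠ B → δ < #(symmDiff A B)) {r : ℕ} (hr : r < Fintype.card α)
    (hrδ : 4 * k * Fintype.card α ≤ δ * (r + 1)) :
    (#𝒜 : ℝ) ≤ 2 * (r + 1) ^ k := by
  set n := Fintype.card α
  have hchoose : (n.choose (r + 1) : ℝ) * (r + 1) ≤ n.choose r * n := by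
    exact_mod_cast (Nat.choose_succ_right_eq n r).trans_le (Nat.mul_le_mul_left _ (Nat.sub_le n r))
  have hpos : (0 : ℝ) < n.choose r := by exact_mod_cast Nat.choose_pos hr.le
  have hmain : (n.choose r : ℝ) * (((#𝒜 : ℝ) - (r + 1) ^ k) * δ * (r + 1)) ≤
      n.choose r * (2 * k * #𝒜 * n) :=
    calc (n.choose r : ℝ) * (((#𝒜 : ℝ) - (r + 1) ^ k) * δ * (r + 1))
        = (n.choose r : ℝ) * ((#𝒜 - (r + 1) ^ k) * δ) * (r + 1) := by ring
      _ ≤ 2 * (n.choose (r + 1) * (k * #𝒜)) * (r + 1) :=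
          mul_le_mul_of_nonneg_right (choose_mul_sub_pow_mul_le hδ.le h𝒜 hsep r) (by positivity)
      _ = 2 * k * #𝒜 * (n.choose (r + 1) * (r + 1)) := by ring
      _ ≤ 2 * k * #𝒜 * (n.choose r * n) := by gcongr
      _ = n.choose r * (2 * k * #𝒜 * n) := by ring
  have hhalf : δ * (r + 1) * ((#𝒜 : ℝ) - (r + 1) ^ k) ≤ δ * (r + 1) * (#𝒜 / 2) := by
    nlinarith [le_of_mul_le_mul_left hmain hpos]
  linarith [le_of_mul_le_mul_left hhalf (by positivity)]

lemma card_le_succ_pow (h𝒜 : 𝒜.vcDim ≤ k) : #𝒜 ≤ (Fintype.card α + 1) ^ k := by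
  simpa using card_image_inter_le h𝒜 univ

lemma card_le_two_mul_pow_div (hδ : 0 < δ) (hδn : δ ≤ Fintype.card α) (hkδ : 4 * (k + 1) < δ)
    (h𝒜 : 𝒜.vcDim ≤ k) (hsep : ∀ A ∈ 𝒜, ∀ B ∈ 𝒜, A ≠ B → δ < #(symmDiff A B)) :
    (#𝒜 : ℝ) ≤ 2 * (8 * (k + 1) * (Fintype.card α / δ)) ^ k := by
  set n := Fintype.card α
  have hnδ : 1 ≤ (n : ℝ) / δ := (one_le_div hδ).2 hδn
  have hn : (n : ℝ) = n / δ * δ := (div_mul_cancel₀ _ hδ.ne').symm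
  set r := ⌊4 * (k + 1) * (n / δ)⌋₊
  have hr_le : (r : ℝ) ≤ 4 * (k + 1) * (n / δ) := Nat.floor_le (by positivity)
  have hr_lt : 4 * (k + 1) * (n / δ) < r + 1 := Nat.lt_floor_add_one _
  have hr : r < n := by
    have : (r : ℝ) < n := by nlinarith
    exact_mod_cast this
  have hrδ : 4 * k * n ≤ δ * (r + 1) := by nlinarith
  calc (#𝒜 : ℝ) ≤ 2 * (r + 1) ^ k := card_le_two_mul_pow hδ h𝒜 hsep hr hrδ
    _ ≤ 2 * (8 * (k + 1) * (n / δ)) ^ k := by gcongr; nlinarith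

end Packing

end Finset

/-- Haussler's packing lemma: if a family `F` of subsets of an `n`-element set has
VC-dimension at most `k`, then any `δ`-separated subfamily of `F` has size at most
`c₁ (n/δ)^k` for a constant `c₁` depending only on `k`. -/
theorem haussler_packing (k : ℕ) :
    ∃ c₁ : ℝ, 0 < c₁ ∧
      ∀ (V : Type) [Fintype V] [DecidableEq V] [Nonempty V]
        (F : Finset (Finset V)) (δ : ℝ),
        0 < δ → δ ≤ (Fintype.card V : ℝ) →
        (∀ X : Finset V, (∀ Y ⊆ X, ∃ A ∈ F, A ∩ X = Y) → X.card ≤ k) →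
        ∀ 𝒳 ⊆ F,
          (∀ A ∈ 𝒳, ∀ B ∈ 𝒳, A ≠ B → δ < ((symmDiff A B).card : ℝ)) →
          (𝒳.card : ℝ) ≤ c₁ * ((Fintype.card V : ℝ) / δ) ^ k := by
  refine ⟨2 * (8 * (k + 1)) ^ k, by positivity, ?_⟩
  intro V _ _ _ F δ hδ hδn hF 𝒳 h𝒳F hsep
  have h𝒳 : 𝒳.vcDim ≤ k := (vcDim_mono h𝒳F).trans <| vcDim_le_iff.2 fun X hX ↦
    hF X fun Y hY ↦ by obtain ⟨A, hA, hXA⟩ := hX hY; exact ⟨A, hA, by rwa [inter_comm]⟩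
  rw [mul_assoc, ← mul_pow]
  rcases le_or_gt δ (4 * (k + 1)) with hsmall | hlarge
  · set n := Fintype.card V
    have hnδ : 1 ≤ (n : ℝ) / δ := (one_le_div hδ).2 hδn
    have hn : (n : ℝ) = n / δ * δ := (div_mul_cancel₀ _ hδ.ne').symm
    calc (#𝒳 : ℝ) ≤ (n + 1) ^ k := by exact_mod_cast card_le_succ_pow h𝒳
      _ ≤ (8 * (k + 1) * (n / δ)) ^ k := by gcongr; nlinarith
      _ ≤ 2 * (8 * (k + 1) * (n / δ)) ^ k := le_mul_of_one_le_left (by positivity) one_le_two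
  · exact card_le_two_mul_pow_div hδ hδn hlarge h𝒳 hsep
end

section
/- For all 0 < ε < 1/4 and sufficiently large bipartite graphs: let G = (U ∪ W, E) be bipartite with |U|, |W| ≥ n(ε), and suppose there exist U' ⊆ U, W' ⊆ W with |U'| ≥ (1−ε)|U|, |W'| ≥ (1−ε)|W|, such that every u ∈ U' satisfies max{|N(u) ∩ W|, |W \ N(u)|} ≥ (1−ε)|W| and every w ∈ W' satisfies max{|N(w) ∩ U|, |U \ N(w)|} ≥ (1−ε)|U|. Then the edge density |E|/(|U||W|) lies in [0, 2√ε) ∪ (1 − 2√ε, 1]. -/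
/-!
Split `U'` into the set `H` of vertices of nearly full degree and the rest, which have nearly
empty degree. If `|H| ≤ √ε |U|`, then every vertex of `U` outside `H` and `U \ U'` has degree
at most `ε |W|`, so the density is at most `√ε + ε + ε < 2√ε`.
Otherwise double count the edges between `H` and `W'`: each vertex of `H` sends at least
`(1 - 2ε) |W|` of them, while a vertex of `W'` of nearly empty degree receives at most
`ε |U| < √ε |H|`. Hence more than `(1 - 2ε - √ε) |W|` vertices of `W'` have nearly full degree,
and the density exceeds `(1 - 2ε - √ε)(1 - ε) ≥ 1 - 2√ε`.
-/

open Finset Fintype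

variable {α β : Type*} [Fintype α] [Fintype β]

lemma card_compl_le_of_one_sub_mul_le [DecidableEq α] {s : Finset α} {ε : ℝ}
    (h : (1 - ε) * card α ≤ #s) :
    (#sᶜ : ℝ) ≤ ε * card α := by
  rw [card_compl, Nat.cast_sub (card_le_univ s)]
  linarith

lemma card_filter_le_of_le_max_of_lt {p : β → Prop} [DecidablePred p] {ε : ℝ}
    (h : (1 - ε) * card β ≤ max (#{b | p b} : ℝ) #{b | ¬p b})
    (hlt : (#{b | p b} : ℝ) < (1 - ε) * card β) :
    (#{b | p b} : ℝ) ≤ ε * card β := by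
  have hsum : (#{b | p b} : ℝ) + #{b | ¬p b} = card β := by
    exact_mod_cast card_filter_add_card_filter_not (s := univ) p
  have := (le_max_iff.mp h).resolve_left hlt.not_ge
  linarith

section Relation

variable (r : α → β → Prop) [∀ a b, Decidable (r a b)]

lemma card_filter_prod_eq_sum_card_left : #{p : α × β | r p.1 p.2} = ∑ a, #{b | r a b} := by
  simp only [card_filter, Fintype.sum_prod_type]

lemma card_filter_prod_eq_sum_card_right : #{p : α × β | r p.1 p.2} = ∑ b, #{a | r a b} := by
  simp only [card_filter, Fintype.sum_prod_type_right]

lemma sum_card_filter_le [DecidableEq α] (s H : Finset α) (t : Finset β) {d : ℝ} (hd : 0 ≤ d)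
    (h : ∀ a ∈ s, a ∉ H → (#{b | r a b} : ℝ) ≤ d) :
    (∑ a, #{b ∈ t | r a b} : ℝ) ≤ (#sᶜ + #H) * #t + card α * d := by
  set X := sᶜ ∪ H
  have hX : ∑ a ∈ X, (#{b ∈ t | r a b} : ℝ) ≤ (#sᶜ + #H) * #t :=
    calc ∑ a ∈ X, (#{b ∈ t | r a b} : ℝ) ≤ ∑ a ∈ X, (#t : ℝ) :=
          sum_le_sum fun a _ => by exact_mod_cast card_filter_le t _
      _ ≤ (#sᶜ + #H) * #t := by
          rw [sum_const, nsmul_eq_mul]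
          gcongr
          exact_mod_cast card_union_le _ _
  have hXc : ∑ a ∈ Xᶜ, (#{b ∈ t | r a b} : ℝ) ≤ card α * d :=
    calc ∑ a ∈ Xᶜ, (#{b ∈ t | r a b} : ℝ) ≤ ∑ a ∈ Xᶜ, d := by
          refine sum_le_sum fun a ha => ?_
          obtain ⟨has, haH⟩ : a ∈ s ∧ a ∉ H := by simpa [X] using ha
          refine le_trans ?_ (h a has haH)
          exact_mod_cast card_le_card (filter_subset_filter _ (subset_univ t))
      _ ≤ card α * d := by
          rw [sum_const, nsmul_eq_mul]
          gcongr
          exact_mod_cast card_le_univ _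
  rw [← sum_add_sum_compl X]
  exact add_le_add hX hXc

lemma card_filter_prod_le [DecidableEq α] (s H : Finset α) {d : ℝ} (hd : 0 ≤ d)
    (h : ∀ a ∈ s, a ∉ H → (#{b | r a b} : ℝ) ≤ d) :
    (#{p : α × β | r p.1 p.2} : ℝ) ≤ (#sᶜ + #H) * card β + card α * d := by
  simpa [card_filter_prod_eq_sum_card_left] using sum_card_filter_le r s H univ hd h

lemma card_mul_le_card_filter_prod (T : Finset β) {m : ℝ} (hT : ∀ b ∈ T, m ≤ #{a | r a b}) :
    #T * m ≤ #{p : α × β | r p.1 p.2} := by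
  rw [card_filter_prod_eq_sum_card_right, Nat.cast_sum]
  calc #T * m ≤ ∑ b ∈ T, (#{a | r a b} : ℝ) := by
        rw [← nsmul_eq_mul]; exact card_nsmul_le_sum _ _ _ hT
    _ ≤ ∑ b, (#{a | r a b} : ℝ) := sum_le_univ_sum_of_nonneg fun _ => Nat.cast_nonneg _

lemma card_mul_le_of_le_card_filter_of_card_filter_le [DecidableEq β] (H : Finset α)
    (t T : Finset β) {m d : ℝ} (hd : 0 ≤ d)
    (hH : ∀ a ∈ H, m ≤ #{b | r a b}) (ht : ∀ b ∈ t, b ∉ T → (#{a | r a b} : ℝ) ≤ d) :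
    #H * m ≤ (#tᶜ + #T) * #H + card β * d :=
  calc #H * m ≤ ∑ a ∈ H, (#{b | r a b} : ℝ) := by
        rw [← nsmul_eq_mul]; exact card_nsmul_le_sum _ _ _ hH
    _ = ∑ b, (#{a ∈ H | r a b} : ℝ) := by
        exact_mod_cast sum_card_bipartiteAbove_eq_sum_card_bipartiteBelow (s := H) (t := univ) r
    _ ≤ (#tᶜ + #T) * #H + card β * d := sum_card_filter_le (fun b a => r a b) t T H hd ht

lemma one_sub_two_mul_le {s : ℝ} (hs : 0 ≤ s) (hs' : s ≤ 1 / 2) :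
    1 - 2 * s ≤ (1 - 2 * s ^ 2 - s) * (1 - s ^ 2) := by
  have : 0 ≤ s * (1 - 2 * s) * (1 - s - s ^ 2) := by
    apply mul_nonneg (mul_nonneg hs (by linarith)); nlinarith
  nlinarith

variable {ε : ℝ}

lemma card_filter_prod_div_lt_of_card_le [DecidableEq α] [Nonempty α] [Nonempty β]
    (hε : 0 < ε) (hε4 : ε < 1 / 4) {U' H : Finset α} (hU' : (1 - ε) * card α ≤ #U')
    (hH : #H ≤ √ε * card α) (hlow : ∀ a ∈ U', a ∉ H → (#{b | r a b} : ℝ) ≤ ε * card β) :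
    (#{p : α × β | r p.1 p.2} : ℝ) / (card α * card β) < 2 * √ε := by
  have hαβ : (0 : ℝ) < card α * card β := by positivity
  have he := card_filter_prod_le r U' H (by positivity) hlow
  have hU'c := card_compl_le_of_one_sub_mul_le hU'
  have h2ε : 2 * ε < √ε := by nlinarith [Real.sq_sqrt hε.le, Real.sqrt_pos.2 hε]
  rw [div_lt_iff₀ hαβ]
  nlinarith [mul_le_mul_of_nonneg_right (add_le_add hU'c hH) (card β).cast_nonneg,
    mul_pos (sub_pos.2 h2ε) hαβ]

lemma one_sub_lt_card_filter_prod_div_of_lt_card [DecidableEq β] [Nonempty β]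
    (hε : 0 < ε) (hε4 : ε < 1 / 4) {H : Finset α} {W' H' : Finset β}
    (hW' : (1 - ε) * card β ≤ #W') (hH : √ε * card α < #H)
    (hHhigh : ∀ a ∈ H, (1 - ε) * card β ≤ #{b | r a b})
    (hH'high : ∀ b ∈ H', (1 - ε) * card α ≤ #{a | r a b})
    (hlow : ∀ b ∈ W', b ∉ H' → (#{a | r a b} : ℝ) ≤ ε * card α) :
    1 - 2 * √ε < (#{p : α × β | r p.1 p.2} : ℝ) / (card α * card β) := by
  set s := √ε
  have hs : s ^ 2 = ε := Real.sq_sqrt hε.le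
  have hs0 : 0 < s := Real.sqrt_pos.2 hε
  have hs1 : s < 1 / 2 := by nlinarith
  have hβ : (0 : ℝ) < card β := by positivity
  have hHpos : (0 : ℝ) < #H := lt_of_le_of_lt (by positivity) hH
  have hα : (0 : ℝ) < card α := hHpos.trans_le (by exact_mod_cast card_le_univ H)
  have hK := card_mul_le_of_le_card_filter_of_card_filter_le r H W' H' (by positivity) hHhigh hlow
  have hεα : ε * card α < s * #H := by rw [← hs]; nlinarith
  have hH' : (1 - 2 * ε - s) * card β < #H' := by
    refine lt_of_mul_lt_mul_right ?_ hHpos.le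
    nlinarith [mul_le_mul_of_nonneg_right (card_compl_le_of_one_sub_mul_le hW') hHpos.le,
      mul_lt_mul_of_pos_left hεα hβ]
  have he := card_mul_le_card_filter_prod r H' hH'high
  have hdens := one_sub_two_mul_le hs0.le hs1.le
  rw [hs] at hdens
  rw [lt_div_iff₀ (by positivity)]
  nlinarith [mul_lt_mul_of_pos_right hH' (show 0 < (1 - ε) * card α by nlinarith),
    mul_le_mul_of_nonneg_right hdens (mul_pos hα hβ).le]

end Relation

/-- Symmetry lemma: if in a large bipartite graph almost every vertex has nearly full
or nearly empty neighborhood, then the edge density is near 0 or near 1. -/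
theorem symmetry_lemma :
    ∀ ε : ℝ, 0 < ε → ε < 1/4 →
    ∃ n : ℕ, ∀ (U W : Type) [Fintype U] [Fintype W]
      (E : U → W → Prop) [∀ u w, Decidable (E u w)],
      n ≤ Fintype.card U → n ≤ Fintype.card W →
      ∀ (U' : Finset U) (W' : Finset W),
        (1 - ε) * (Fintype.card U : ℝ) ≤ (U'.card : ℝ) →
        (1 - ε) * (Fintype.card W : ℝ) ≤ (W'.card : ℝ) →
        (∀ u ∈ U', (1 - ε) * (Fintype.card W : ℝ) ≤
          max ((univ.filter (fun w => E u w)).card : ℝ)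
              ((univ.filter (fun w => ¬ E u w)).card : ℝ)) →
        (∀ w ∈ W', (1 - ε) * (Fintype.card U : ℝ) ≤
          max ((univ.filter (fun u => E u w)).card : ℝ)
              ((univ.filter (fun u => ¬ E u w)).card : ℝ)) →
        (((univ.filter (fun p : U × W => E p.1 p.2)).card : ℝ) /
            ((Fintype.card U : ℝ) * (Fintype.card W : ℝ)) < 2 * Real.sqrt ε
          ∨ 1 - 2 * Real.sqrt ε <
            ((univ.filter (fun p : U × W => E p.1 p.2)).card : ℝ) /
              ((Fintype.card U : ℝ) * (Fintype.card W : ℝ))) := by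
  intro ε hε hε4
  refine ⟨1, fun U W _ _ E _ hU hW U' W' hU' hW' hUdeg hWdeg => ?_⟩
  classical
  have : Nonempty U := Fintype.card_pos_iff.1 hU
  have : Nonempty W := Fintype.card_pos_iff.1 hW
  set H := U'.filter fun u => (1 - ε) * card W ≤ (#{w | E u w} : ℝ)
  set H' := W'.filter fun w => (1 - ε) * card U ≤ (#{u | E u w} : ℝ)
  have hlow : ∀ u ∈ U', u ∉ H → (#{w | E u w} : ℝ) ≤ ε * card W := fun u hu hH =>
    card_filter_le_of_le_max_of_lt (hUdeg u hu) (not_le.1 fun h => hH (mem_filter.2 ⟨hu, h⟩))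
  have hlow' : ∀ w ∈ W', w ∉ H' → (#{u | E u w} : ℝ) ≤ ε * card U := fun w hw hH' =>
    card_filter_le_of_le_max_of_lt (hWdeg w hw) (not_le.1 fun h => hH' (mem_filter.2 ⟨hw, h⟩))
  rcases le_or_gt (#H : ℝ) (√ε * card U) with hH | hH
  · exact Or.inl (card_filter_prod_div_lt_of_card_le E hε hε4 hU' hH hlow)
  · exact Or.inr (one_sub_lt_card_filter_prod_div_of_lt_card E hε hε4 hW' hH
      (fun u hu => (mem_filter.1 hu).2) (fun w hw => (mem_filter.1 hw).2) hlow')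
end

section
/- For all 0 < ε < 1/4 and sufficiently large bipartite graphs: if G = (U ∪ W, E) has |U|, |W| ≥ n(ε) and density |E|/(|U||W|) ∈ (2√ε, 1 − 2√ε), then either there is U' ⊆ U with |U'| ≥ ε|U| such that every u ∈ U' has |N(u) ∩ W|/|W| ∈ (ε, 1−ε), or there is W' ⊆ W with |W'| ≥ ε|W| such that every w ∈ W' has |N(w) ∩ U|/|U| ∈ (ε, 1−ε). -/
open Finset
open scoped Classical

/-!
Suppose fewer than `ε|U|` vertices of `U` and fewer than `ε|W|` vertices of `W` have a medium
neighbourhood fraction, and let `d` be the density. Since the neighbourhood fractions on `U` sum to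
`d|U|`, more than `(d - 2ε)|U|` vertices of `U` are high (miss at most `ε|W|` vertices of `W`);
dually, more than `(1 - d - 2ε)|W|` vertices of `W` are low (see at most `ε|U|` vertices of `U`).
Counting the edges between the high set `H` and the low set `L` from both sides gives
`|H| (|L| - ε|W|) ≤ |L| ε|U|`. If `2√ε < d < 1 - 2√ε`, both `|H|/|U|` and `|L|/|W|` exceed
`c = 2√ε - 2ε`, and `c ≥ 2ε` because `ε ≤ 1/4`; this makes the counting inequality fail.
-/

section Mass

variable {ι : Type*} {s : Finset ι} {f : ι → ℝ} {ε : ℝ}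

theorem sum_le_mul_card_add_card_filter_add_card_filter (hε : 0 ≤ ε) (hf : ∀ i ∈ s, f i ≤ 1) :
    ∑ i ∈ s, f i ≤ ε * #s + #{i ∈ s | ε < f i ∧ f i < 1 - ε} + #{i ∈ s | 1 - ε ≤ f i} := by
  calc ∑ i ∈ s, f i
      ≤ ∑ i ∈ s, (ε + (if ε < f i ∧ f i < 1 - ε then 1 else 0)
          + (if 1 - ε ≤ f i then 1 else 0)) := by
        refine sum_le_sum fun i hi => ?_
        have := hf i hi
        split_ifs <;> grind
    _ = _ := by simp only [sum_add_distrib, sum_const, nsmul_eq_mul, sum_boole]; ring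

theorem sum_one_sub_le_mul_card_add_card_filter_add_card_filter (hε : 0 ≤ ε)
    (hf : ∀ i ∈ s, 0 ≤ f i) :
    ∑ i ∈ s, (1 - f i) ≤ ε * #s + #{i ∈ s | ε < f i ∧ f i < 1 - ε} + #{i ∈ s | f i ≤ ε} := by
  convert sum_le_mul_card_add_card_filter_add_card_filter (f := fun i => 1 - f i) hε
    (fun i hi => by linarith [hf i hi]) using 4
  · exact congrArg _ (filter_congr fun i _ => by grind)
  · exact filter_congr fun i _ => by grind

end Mass

theorem Finset.card_add_card_filter_le {β : Type*} [Fintype β] (t : Finset β) (p : β → Prop)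
    [DecidablePred p] : #t + #{b | p b} ≤ #{b ∈ t | p b} + Fintype.card β := by
  have hinter : t ∩ ({b | p b} : Finset β) = {b ∈ t | p b} := by ext; simp
  rw [← card_union_add_card_inter, hinter, add_comm]
  exact Nat.add_le_add_left (card_le_univ _) _

theorem two_mul_le_sqrt_sub_of_le {ε : ℝ} (h0 : 0 ≤ ε) (h : ε ≤ 1 / 4) :
    2 * ε ≤ 2 * √ε - 2 * ε := by
  nlinarith [Real.sq_sqrt h0, Real.sqrt_nonneg ε, Real.sqrt_le_sqrt h,
    show √(1 / 4 : ℝ) = 1 / 2 by rw [Real.sqrt_eq_iff_mul_self_eq] <;> norm_num]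

theorem mul_mul_lt_mul_sub {ε c m k x y : ℝ} (hε : 0 < ε) (hc : 2 * ε ≤ c) (hm : 0 < m)
    (hk : 0 < k) (hx : c * m < x) (hy : c * k < y) : y * (ε * m) < x * (y - ε * k) := by
  have hyε : 0 < y - ε * k := by nlinarith
  have hcy : c * ε * k < (c - ε) * y := by
    nlinarith [mul_lt_mul_of_pos_left hy (by linarith : 0 < c - ε),
      mul_le_mul_of_nonneg_right (by linarith : ε ≤ c - ε) (mul_pos (by linarith : 0 < c) hk).le]
  calc y * (ε * m) < c * m * (y - ε * k) := by nlinarith [mul_lt_mul_of_pos_left hcy hm]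
    _ < x * (y - ε * k) := by gcongr

namespace Bipartite

variable {α β : Type*} (r : α → β → Prop) [∀ a b, Decidable (r a b)]

noncomputable def fracAbove [Fintype β] (a : α) : ℝ := #{b | r a b} / Fintype.card β

noncomputable def fracBelow [Fintype α] (b : β) : ℝ := #{a | r a b} / Fintype.card α

theorem fracAbove_le_one [Fintype β] (a : α) : fracAbove r a ≤ 1 :=
  div_le_one_of_le₀ (mod_cast card_le_univ _) (Nat.cast_nonneg _)

theorem fracBelow_nonneg [Fintype α] (b : β) : 0 ≤ fracBelow r b := by
  unfold fracBelow; positivity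

variable [Fintype α] [Fintype β]

theorem card_mul_sub_le_card_mul {s : Finset α} {t : Finset β} {x y : ℝ}
    (hs : ∀ a ∈ s, (Fintype.card β : ℝ) - x ≤ #{b | r a b})
    (ht : ∀ b ∈ t, (#{a | r a b} : ℝ) ≤ y) :
    #s * (#t - x) ≤ #t * y := by
  simpa only [nsmul_eq_mul] using card_nsmul_le_card_nsmul r (m := (#t : ℝ) - x) (n := y)
    (fun a ha => by
      have hcard : ((#t + #{b | r a b} : ℕ) : ℝ) ≤ (#{b ∈ t | r a b} + Fintype.card β : ℕ) :=
        Nat.cast_le.2 (t.card_add_card_filter_le (r a))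
      push_cast at hcard
      unfold bipartiteAbove
      linarith [hs a ha])
    (fun b hb =>
      (Nat.cast_le.2 (card_le_card (filter_subset_filter _ (subset_univ s)))).trans (ht b hb))

noncomputable def density : ℝ := #{p : α × β | r p.1 p.2} / (Fintype.card α * Fintype.card β)

theorem card_filter_prod_eq_sum_card_above :
    #{p : α × β | r p.1 p.2} = ∑ a, #{b | r a b} := by
  simp only [card_filter, Fintype.sum_prod_type]

theorem card_filter_prod_eq_sum_card_below :
    #{p : α × β | r p.1 p.2} = ∑ b, #{a | r a b} :=
  (card_filter_prod_eq_sum_card_above r).trans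
    (sum_card_bipartiteAbove_eq_sum_card_bipartiteBelow r)

theorem sum_fracAbove : ∑ a, fracAbove r a = density r * Fintype.card α := by
  rcases isEmpty_or_nonempty α with hα | hα
  · simp
  · have : (Fintype.card α : ℝ) ≠ 0 := by positivity
    simp only [fracAbove, density, ← sum_div, card_filter_prod_eq_sum_card_above, Nat.cast_sum]
    field_simp

theorem sum_fracBelow : ∑ b, fracBelow r b = density r * Fintype.card β := by
  rcases isEmpty_or_nonempty β with hβ | hβ
  · simp
  · have : (Fintype.card β : ℝ) ≠ 0 := by positivity
    simp only [fracBelow, density, ← sum_div, card_filter_prod_eq_sum_card_below, Nat.cast_sum]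
    field_simp

variable {r} {ε : ℝ}

theorem density_sub_mul_lt_card_fracAbove_ge (hε : 0 ≤ ε)
    (hmedium : #{a | ε < fracAbove r a ∧ fracAbove r a < 1 - ε} < ε * Fintype.card α) :
    (density r - 2 * ε) * Fintype.card α < #{a | 1 - ε ≤ fracAbove r a} := by
  have := sum_le_mul_card_add_card_filter_add_card_filter (s := univ) hε
    fun a _ => fracAbove_le_one (r := r) a
  rw [sum_fracAbove, card_univ] at this
  linarith

theorem one_sub_density_sub_mul_lt_card_fracBelow_le (hε : 0 ≤ ε)
    (hmedium : #{b | ε < fracBelow r b ∧ fracBelow r b < 1 - ε} < ε * Fintype.card β) :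
    (1 - density r - 2 * ε) * Fintype.card β < #{b | fracBelow r b ≤ ε} := by
  have := sum_one_sub_le_mul_card_add_card_filter_add_card_filter (s := univ) hε
    fun b _ => fracBelow_nonneg (r := r) b
  rw [sum_sub_distrib, sum_fracBelow, sum_const, card_univ, nsmul_one] at this
  linarith

theorem density_le_or_ge_of_card_medium_lt (hε : ε ≤ 1 / 4)
    (hα : #{a | ε < fracAbove r a ∧ fracAbove r a < 1 - ε} < ε * Fintype.card α)
    (hβ : #{b | ε < fracBelow r b ∧ fracBelow r b < 1 - ε} < ε * Fintype.card β) :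
    density r ≤ 2 * √ε ∨ 1 - 2 * √ε ≤ density r := by
  have hεm : 0 < ε * Fintype.card α := (Nat.cast_nonneg _).trans_lt hα
  have hεk : 0 < ε * Fintype.card β := (Nat.cast_nonneg _).trans_lt hβ
  have hε0 : 0 < ε := pos_of_mul_pos_left hεm (Nat.cast_nonneg _)
  have hm : (0 : ℝ) < Fintype.card α := pos_of_mul_pos_right hεm hε0.le
  have hk : (0 : ℝ) < Fintype.card β := pos_of_mul_pos_right hεk hε0.le
  have hhigh := density_sub_mul_lt_card_fracAbove_ge hε0.le hα
  have hlow := one_sub_density_sub_mul_lt_card_fracBelow_le hε0.le hβ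
  have hcount := card_mul_sub_le_card_mul r (x := ε * Fintype.card β) (y := ε * Fintype.card α)
    (s := {a | 1 - ε ≤ fracAbove r a}) (t := {b | fracBelow r b ≤ ε})
    (fun a ha => by
      have := (le_div_iff₀ hk).1 (mem_filter.1 ha).2
      linarith)
    (fun b hb => by
      have := (div_le_iff₀ hm).1 (mem_filter.1 hb).2
      linarith)
  by_contra! hd
  have hc := two_mul_le_sqrt_sub_of_le hε0.le hε
  exact (mul_mul_lt_mul_sub hε0 hc hm hk (by nlinarith) (by nlinarith)).not_ge hcount

end Bipartite

open Bipartite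

/-- Corollary of the symmetry lemma: a large bipartite graph of medium density
has a substantial set of vertices on one side all of whose degrees are medium. -/
theorem symmetry_corollary :
    ∀ ε : ℝ, 0 < ε → ε < 1/4 →
    ∃ n : ℕ, ∀ (U W : Type) [Fintype U] [Fintype W]
      (E : U → W → Prop) [∀ u w, Decidable (E u w)],
      n ≤ Fintype.card U → n ≤ Fintype.card W →
      2 * Real.sqrt ε <
        ((univ.filter (fun p : U × W => E p.1 p.2)).card : ℝ) /
          ((Fintype.card U : ℝ) * (Fintype.card W : ℝ)) →
      ((univ.filter (fun p : U × W => E p.1 p.2)).card : ℝ) /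
          ((Fintype.card U : ℝ) * (Fintype.card W : ℝ)) < 1 - 2 * Real.sqrt ε →
      (∃ U' : Finset U, ε * (Fintype.card U : ℝ) ≤ (U'.card : ℝ) ∧
          ∀ u ∈ U',
            ε < ((univ.filter (fun w => E u w)).card : ℝ) / (Fintype.card W : ℝ) ∧
            ((univ.filter (fun w => E u w)).card : ℝ) / (Fintype.card W : ℝ) < 1 - ε) ∨
      (∃ W' : Finset W, ε * (Fintype.card W : ℝ) ≤ (W'.card : ℝ) ∧
          ∀ w ∈ W',
            ε < ((univ.filter (fun u => E u w)).card : ℝ) / (Fintype.card U : ℝ) ∧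
            ((univ.filter (fun u => E u w)).card : ℝ) / (Fintype.card U : ℝ) < 1 - ε) := by
  intro ε _ hε
  refine ⟨0, fun U W _ _ E _ _ _ hdense hsparse => ?_⟩
  rcases le_or_gt (ε * Fintype.card U) #{u | ε < fracAbove E u ∧ fracAbove E u < 1 - ε}
    with hU | hU
  · exact Or.inl ⟨_, hU, fun u hu => (mem_filter.1 hu).2⟩
  rcases le_or_gt (ε * Fintype.card W) #{w | ε < fracBelow E w ∧ fracBelow E w < 1 - ε}
    with hW | hW
  · exact Or.inr ⟨_, hW, fun w hw => (mem_filter.1 hw).2⟩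
  rcases density_le_or_ge_of_card_medium_lt hε.le hU hW with h | h
  · exact absurd h hdense.not_ge
  · exact absurd h hsparse.not_ge
end

section
/- For all 0 < ε < 1/2, d₂ > 0, 0 < δ ≤ (d₂/2)⁴⁸, and sufficiently large n: let H = (V₁ ∪ V₂ ∪ V₃, R) be a 3-partite 3-graph on n vertices with ||V_i| − |V_j|| ≤ δ|V_i| for all i,j, and let G = (V₁ ∪ V₂ ∪ V₃, E) be a 3-partite graph with each G[V_i, V_j] having dev₂(δ, d₂). If |R ∩ K₃⁽²⁾(G)| ≤ ε|K₃⁽²⁾(G)|, then (H|G, G) has dev_{2,3}(δ, 6ε). -/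
open Finset
open scoped Classical

/-- Edge density of a bipartite graph. -/
noncomputable def density {α β : Type*} [Fintype α] [Fintype β] (E : Finset (α × β)) : ℝ :=
  (E.card : ℝ) / ((Fintype.card α : ℝ) * (Fintype.card β : ℝ))

/-- `g(u,w) = 1 - d_B` if `uw ∈ E`, `-d_B` otherwise. -/
noncomputable def gfun {α β : Type*} [Fintype α] [Fintype β] [DecidableEq α] [DecidableEq β]
    (E : Finset (α × β)) (u : α) (w : β) : ℝ :=
  if (u, w) ∈ E then 1 - density E else - density E

/-- The bipartite graph with edge set `E` has `dev₂(ε, d)`. -/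
def dev2 {α β : Type*} [Fintype α] [Fintype β] [DecidableEq α] [DecidableEq β]
    (E : Finset (α × β)) (ε d : ℝ) : Prop :=
  |density E - d| < ε ∧
    ∑ u₀ : α, ∑ u₁ : α, ∑ w₀ : β, ∑ w₁ : β,
        gfun E u₀ w₀ * gfun E u₀ w₁ * gfun E u₁ w₀ * gfun E u₁ w₁
      ≤ ε * (Fintype.card α : ℝ) ^ 2 * (Fintype.card β : ℝ) ^ 2

/-- The set of triangles `K₃⁽²⁾(G)` of the 3-partite graph with bipartite pieces
`E12`, `E13`, `E23`. -/
def triangles {V₁ V₂ V₃ : Type*} [Fintype V₁] [Fintype V₂] [Fintype V₃]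
    [DecidableEq V₁] [DecidableEq V₂] [DecidableEq V₃]
    (E12 : Finset (V₁ × V₂)) (E13 : Finset (V₁ × V₃)) (E23 : Finset (V₂ × V₃)) :
    Finset (V₁ × V₂ × V₃) :=
  univ.filter (fun x => (x.1, x.2.1) ∈ E12 ∧ (x.1, x.2.2) ∈ E13 ∧ (x.2.1, x.2.2) ∈ E23)

/-- The function `h_{H,G}`: `1 - d₃` on `R ∩ K₃⁽²⁾(G)`, `-d₃` on `K₃⁽²⁾(G) \ R`, `0` otherwise,
where `RT = R ∩ T` and `T = K₃⁽²⁾(G)`. -/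
noncomputable def hfun {V₁ V₂ V₃ : Type*} [DecidableEq V₁] [DecidableEq V₂] [DecidableEq V₃]
    (RT T : Finset (V₁ × V₂ × V₃)) (d₃ : ℝ) (x : V₁) (y : V₂) (z : V₃) : ℝ :=
  if (x, y, z) ∈ RT then 1 - d₃ else if (x, y, z) ∈ T then - d₃ else 0

/-!
Write `τ`, `r` for the indicators of `T = K₃⁽²⁾(G)` and of `R ∩ T`. Then `h = r - d₃ τ` with
`d₃ ≤ ε`, so over the eight corners of a box the product of `h` is at most `1 = ∏ r` when every
corner lies in `R`, and at most `ε ∏ τ` in absolute value otherwise. All corners of the box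
spanned by two triangles `s`, `t` are triangles only if the six edges between `s` and `t` are
present; hence the deviation sum is at most `ε O(T) + O(R ∩ T)`, where `O(S)` counts the pairs
`s, t ∈ S` joined by these six edges.

Replacing edges one at a time by their densities, and bounding each error term by Cauchy–Schwarz
twice against the box norm of `G - d` (which `dev₂(δ, d₂)` controls), gives
`O(S) ≤ (d₁₂d₁₃d₂₃)² |S|² + 6η |S| n₁n₂n₃` and `|T| ≤ (d₁₂d₁₃d₂₃ + 3η) n₁n₂n₃` whenever
`η⁴ ≥ δ`. With `η = (d₂/2)¹²` all densities are within 5% of `d₂`, and `|R ∩ T| ≤ ε |T|` turns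
these counts into the bound `6ε d₂¹² n₁²n₂²n₃²` with room to spare.
-/

section BoxNorm

variable {X Y O P Q Ω S T : Type*} [Fintype X] [Fintype Y] [Fintype O] [Fintype P] [Fintype Q]
  [Fintype Ω] [Fintype S] [Fintype T]

/-- The number of (weighted) 4-cycles of `g`, i.e. the fourth power of its box norm. -/
def boxSum (g : X → Y → ℝ) : ℝ :=
  ∑ x₀, ∑ x₁, ∑ y₀, ∑ y₁, g x₀ y₀ * g x₀ y₁ * g x₁ y₀ * g x₁ y₁

lemma boxSum_eq_sum_sq (g : X → Y → ℝ) :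
    boxSum g = ∑ y₀, ∑ y₁, (∑ x, g x y₀ * g x y₁) ^ 2 := by
  calc boxSum g
      = ∑ p : X × X, ∑ q : Y × Y, g p.1 q.1 * g p.1 q.2 * g p.2 q.1 * g p.2 q.2 := by
        simp only [boxSum, Fintype.sum_prod_type]
    _ = ∑ q : Y × Y, ∑ p : X × X, g p.1 q.1 * g p.1 q.2 * g p.2 q.1 * g p.2 q.2 :=
        Finset.sum_comm
    _ = _ := by
        simp only [Fintype.sum_prod_type, sq, Finset.sum_mul_sum]
        exact Finset.sum_congr rfl fun _ _ => Finset.sum_congr rfl fun _ _ =>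
          Finset.sum_congr rfl fun _ _ => Finset.sum_congr rfl fun _ _ => by ring

lemma sq_sum_sq_le_boxSum (B : Y → ℝ) (g : X → Y → ℝ) :
    (∑ x, (∑ y, B y * g x y) ^ 2) ^ 2 ≤ (∑ y, B y ^ 2) ^ 2 * boxSum g := by
  have hexpand : ∑ x, (∑ y, B y * g x y) ^ 2
      = ∑ q : Y × Y, (B q.1 * B q.2) * ∑ x, g x q.1 * g x q.2 := by
    simp only [Finset.mul_sum]
    rw [Finset.sum_comm]
    simp only [Fintype.sum_prod_type, sq, Finset.sum_mul_sum]
    exact Finset.sum_congr rfl fun _ _ => Finset.sum_congr rfl fun _ _ =>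
      Finset.sum_congr rfl fun _ _ => by ring
  have hB : ∑ q : Y × Y, (B q.1 * B q.2) ^ 2 = (∑ y, B y ^ 2) ^ 2 := by
    simp only [Fintype.sum_prod_type, sq, Finset.sum_mul_sum]
    exact Finset.sum_congr rfl fun _ _ => Finset.sum_congr rfl fun _ _ => by ring
  rw [hexpand, ← hB, boxSum_eq_sum_sq, ← Fintype.sum_prod_type']
  exact Finset.sum_mul_sq_le_sq_mul_sq _ _ _

lemma sum_mul_mul_pow_four_le_boxSum (A a : O → X → ℝ) (B b : O → Y → ℝ) (g : X → Y → ℝ)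
    (hA : ∀ o x, A o x ^ 2 ≤ a o x) (hB : ∀ o y, B o y ^ 2 ≤ b o y) :
    (∑ o, ∑ x, ∑ y, A o x * B o y * g x y) ^ 4
      ≤ (∑ o, ∑ x, a o x) ^ 2 * (∑ o, ∑ y, b o y) ^ 2 * boxSum g := by
  set C : O → ℝ := fun o => ∑ x, (∑ y, B o y * g x y) ^ 2
  have hC : ∀ o, 0 ≤ C o := fun o => Finset.sum_nonneg fun _ _ => sq_nonneg _
  have ha : ∀ o, 0 ≤ ∑ x, a o x := fun o =>
    Finset.sum_nonneg fun x _ => (sq_nonneg _).trans (hA o x)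
  have hb : ∀ o, 0 ≤ ∑ y, b o y := fun o =>
    Finset.sum_nonneg fun y _ => (sq_nonneg _).trans (hB o y)
  have hbox : 0 ≤ boxSum g := by rw [boxSum_eq_sum_sq]; positivity
  have hinner : ∀ o, (∑ x, ∑ y, A o x * B o y * g x y) ^ 2 ≤ (∑ x, a o x) * C o := by
    intro o
    calc (∑ x, ∑ y, A o x * B o y * g x y) ^ 2
        = (∑ x, A o x * ∑ y, B o y * g x y) ^ 2 := by
          simp only [Finset.mul_sum, mul_assoc]
      _ ≤ (∑ x, A o x ^ 2) * C o := Finset.sum_mul_sq_le_sq_mul_sq _ _ _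
      _ ≤ (∑ x, a o x) * C o :=
          mul_le_mul_of_nonneg_right (Finset.sum_le_sum fun x _ => hA o x) (hC o)
  have hfirst : (∑ o, ∑ x, ∑ y, A o x * B o y * g x y) ^ 2
      ≤ (∑ o, ∑ x, a o x) * ∑ o, C o :=
    Finset.sum_sq_le_sum_mul_sum_of_sq_le_mul _ (fun o _ => ha o) (fun o _ => hC o)
      fun o _ => hinner o
  have hsecond : (∑ o, C o) ^ 2 ≤ (∑ o, ∑ y, b o y) * ∑ o, (∑ y, b o y) * boxSum g := by
    refine Finset.sum_sq_le_sum_mul_sum_of_sq_le_mul _ (fun o _ => hb o)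
      (fun o _ => mul_nonneg (hb o) hbox) fun o _ => ?_
    calc C o ^ 2 ≤ (∑ y, B o y ^ 2) ^ 2 * boxSum g := sq_sum_sq_le_boxSum _ _
      _ ≤ (∑ y, b o y) ^ 2 * boxSum g := by
          have : ∑ y, B o y ^ 2 ≤ ∑ y, b o y := Finset.sum_le_sum fun y _ => hB o y
          gcongr
      _ = (∑ y, b o y) * ((∑ y, b o y) * boxSum g) := by ring
  rw [← Finset.sum_mul] at hsecond
  calc (∑ o, ∑ x, ∑ y, A o x * B o y * g x y) ^ 4
      = ((∑ o, ∑ x, ∑ y, A o x * B o y * g x y) ^ 2) ^ 2 := by ring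
    _ ≤ ((∑ o, ∑ x, a o x) * ∑ o, C o) ^ 2 := by gcongr
    _ = (∑ o, ∑ x, a o x) ^ 2 * (∑ o, C o) ^ 2 := by ring
    _ ≤ (∑ o, ∑ x, a o x) ^ 2 * ((∑ o, ∑ y, b o y) * ((∑ o, ∑ y, b o y) * boxSum g)) := by
        gcongr
    _ = _ := by ring

lemma sum_mul_mul_le_of_boxSum_le {η M : ℝ} (e : O × X × Y ≃ Ω) (F : Ω → ℝ)
    (A a : O → X → ℝ) (B b : O → Y → ℝ) (g : X → Y → ℝ)
    (hF : ∀ o x y, F (e (o, x, y)) = A o x * B o y * g x y)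
    (hA : ∀ o x, A o x ^ 2 ≤ a o x) (hB : ∀ o y, B o y ^ 2 ≤ b o y)
    (hg : boxSum g ≤ η ^ 4 * (Fintype.card X : ℝ) ^ 2 * (Fintype.card Y : ℝ) ^ 2)
    (hη : 0 ≤ η) (hM : 0 ≤ M)
    (hab : (∑ o, ∑ x, a o x) * (∑ o, ∑ y, b o y) * Fintype.card X * Fintype.card Y ≤ M ^ 2) :
    ∑ ω, F ω ≤ η * M := by
  have hsum : ∑ ω, F ω = ∑ o, ∑ x, ∑ y, A o x * B o y * g x y := by
    rw [← e.sum_comp]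
    simp only [Fintype.sum_prod_type, hF]
  have ha : 0 ≤ ∑ o, ∑ x, a o x :=
    Finset.sum_nonneg fun o _ => Finset.sum_nonneg fun x _ => (sq_nonneg _).trans (hA o x)
  have hb : 0 ≤ ∑ o, ∑ y, b o y :=
    Finset.sum_nonneg fun o _ => Finset.sum_nonneg fun y _ => (sq_nonneg _).trans (hB o y)
  rw [hsum]
  refine le_of_pow_le_pow_left₀ four_ne_zero (by positivity) ?_
  calc (∑ o, ∑ x, ∑ y, A o x * B o y * g x y) ^ 4
      ≤ (∑ o, ∑ x, a o x) ^ 2 * (∑ o, ∑ y, b o y) ^ 2 * boxSum g :=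
        sum_mul_mul_pow_four_le_boxSum A a B b g hA hB
    _ ≤ (∑ o, ∑ x, a o x) ^ 2 * (∑ o, ∑ y, b o y) ^ 2 *
          (η ^ 4 * (Fintype.card X : ℝ) ^ 2 * (Fintype.card Y : ℝ) ^ 2) := by gcongr
    _ = η ^ 4 * ((∑ o, ∑ x, a o x) * (∑ o, ∑ y, b o y) * Fintype.card X * Fintype.card Y) ^ 2 := by
        ring
    _ ≤ η ^ 4 * (M ^ 2) ^ 2 := by gcongr
    _ = (η * M) ^ 4 := by ring

lemma sum_sum_mul_mul_le_of_boxSum_le {η M : ℝ} (eS : P × X ≃ S) (eT : Q × Y ≃ T)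
    (F : S → T → ℝ) (A : P → Q → X → ℝ) (B : P → Q → Y → ℝ) (a : S → ℝ) (b : T → ℝ)
    (g : X → Y → ℝ)
    (hF : ∀ p q x y, F (eS (p, x)) (eT (q, y)) = A p q x * B p q y * g x y)
    (hA : ∀ p q x, A p q x ^ 2 ≤ a (eS (p, x))) (hB : ∀ p q y, B p q y ^ 2 ≤ b (eT (q, y)))
    (hg : boxSum g ≤ η ^ 4 * (Fintype.card X : ℝ) ^ 2 * (Fintype.card Y : ℝ) ^ 2)
    (hη : 0 ≤ η) (hM : 0 ≤ M)
    (hab : (Fintype.card Q * ∑ s, a s) * (Fintype.card P * ∑ t, b t) *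
      Fintype.card X * Fintype.card Y ≤ M ^ 2) :
    ∑ s, ∑ t, F s t ≤ η * M := by
  have ha : ∑ o : P × Q, ∑ x, a (eS (o.1, x)) = Fintype.card Q * ∑ s, a s := by
    simp only [Fintype.sum_prod_type, Finset.sum_const, Finset.card_univ, nsmul_eq_mul,
      ← Finset.mul_sum]
    rw [← eS.sum_comp, Fintype.sum_prod_type]
  have hb : ∑ o : P × Q, ∑ y, b (eT (o.2, y)) = Fintype.card P * ∑ t, b t := by
    simp only [Fintype.sum_prod_type, Finset.sum_const, Finset.card_univ, nsmul_eq_mul]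
    rw [← eT.sum_comp, Fintype.sum_prod_type]
  rw [← Fintype.sum_prod_type']
  refine sum_mul_mul_le_of_boxSum_le ((Equiv.prodProdProdComm P Q X Y).trans (eS.prodCongr eT))
    (fun st => F st.1 st.2) (fun o x => A o.1 o.2 x) (fun o x => a (eS (o.1, x)))
    (fun o y => B o.1 o.2 y) (fun o y => b (eT (o.2, y))) g
    (fun o x y => hF o.1 o.2 x y) (fun o x => hA o.1 o.2 x) (fun o y => hB o.1 o.2 y)
    hg hη hM ?_
  rwa [ha, hb]

end BoxNorm

lemma sq_mul_le_of_abs_le_one {r c : ℝ} (hr : 0 ≤ r ∧ r ≤ 1) (hc : |c| ≤ 1) :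
    (r * c) ^ 2 ≤ r := by
  have hc2 : c ^ 2 ≤ 1 := (sq_le_one_iff_abs_le_one c).mpr hc
  nlinarith [mul_le_mul_of_nonneg_left hc2 (sq_nonneg r)]

section Counting

variable {V₁ V₂ V₃ : Type*} {f₁₂ : V₁ → V₂ → ℝ} {f₁₃ : V₁ → V₃ → ℝ} {f₂₃ : V₂ → V₃ → ℝ}
  {d₁₂ d₁₃ d₂₃ η : ℝ}

/-- `link f s t * link f t s` weighs the six edges joining the triangles `s` and `t` into an
octahedron, and `link f t t` weighs the triangle `t`. -/
def link (f₁₂ : V₁ → V₂ → ℝ) (f₁₃ : V₁ → V₃ → ℝ) (f₂₃ : V₂ → V₃ → ℝ) (s t : V₁ × V₂ × V₃) :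
    ℝ :=
  f₁₂ s.1 t.2.1 * f₁₃ s.1 t.2.2 * f₂₃ s.2.1 t.2.2

/-- The corners `(uᵢ, wⱼ, zₖ)` of the box spanned by `s = (u₀, w₀, z₀)` and `t = (u₁, w₁, z₁)`,
in lexicographic order of `(i, j, k)`. -/
def corner (s t : V₁ × V₂ × V₃) : Fin 8 → V₁ × V₂ × V₃ :=
  ![s, (s.1, s.2.1, t.2.2), (s.1, t.2.1, s.2.2), (s.1, t.2.1, t.2.2),
    (t.1, s.2.1, s.2.2), (t.1, s.2.1, t.2.2), (t.1, t.2.1, s.2.2), t]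

lemma prod_corner_le {w : V₁ × V₂ × V₃ → ℝ} (hw : ∀ x, 0 ≤ w x)
    (h₁₂ : ∀ x, w x ≤ f₁₂ x.1 x.2.1) (h₁₃ : ∀ x, w x ≤ f₁₃ x.1 x.2.2)
    (h₂₃ : ∀ x, w x ≤ f₂₃ x.2.1 x.2.2) (s t : V₁ × V₂ × V₃) :
    ∏ i, w (corner s t i) ≤ w s * w t * (link f₁₂ f₁₃ f₂₃ s t * link f₁₂ f₁₃ f₂₃ t s) :=
  calc ∏ i, w (corner s t i)
      ≤ ∏ i, ![w s, f₁₃ s.1 t.2.2, f₂₃ t.2.1 s.2.2, f₁₂ s.1 t.2.1,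
          f₁₂ t.1 s.2.1, f₂₃ s.2.1 t.2.2, f₁₃ t.1 s.2.2, w t] i :=
        Finset.prod_le_prod (fun _ _ => hw _) fun i _ => by
          fin_cases i
          exacts [le_rfl, h₁₃ _, h₂₃ _, h₁₂ _, h₁₂ _, h₂₃ _, h₁₃ _, le_rfl]
    _ = w s * w t * (link f₁₂ f₁₃ f₂₃ s t * link f₁₂ f₁₃ f₂₃ t s) := by
        simp only [Fin.prod_univ_eight, link, Matrix.cons_val]
        ring

variable [Fintype V₁] [Fintype V₂] [Fintype V₃]

lemma sum_box_eq (F : V₁ → V₁ → V₂ → V₂ → V₃ → V₃ → ℝ) :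
    ∑ u₀, ∑ u₁, ∑ w₀, ∑ w₁, ∑ z₀, ∑ z₁, F u₀ u₁ w₀ w₁ z₀ z₁
      = ∑ s : V₁ × V₂ × V₃, ∑ t : V₁ × V₂ × V₃, F s.1 t.1 s.2.1 t.2.1 s.2.2 t.2.2 := by
  calc ∑ u₀, ∑ u₁, ∑ w₀, ∑ w₁, ∑ z₀, ∑ z₁, F u₀ u₁ w₀ w₁ z₀ z₁
      = ∑ x : V₁ × V₁ × V₂ × V₂ × V₃ × V₃,
          F x.1 x.2.1 x.2.2.1 x.2.2.2.1 x.2.2.2.2.1 x.2.2.2.2.2 := by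
        simp only [Fintype.sum_prod_type]
    _ = ∑ st : (V₁ × V₂ × V₃) × (V₁ × V₂ × V₃),
          F st.1.1 st.2.1 st.1.2.1 st.2.2.1 st.1.2.2 st.2.2.2 :=
        Fintype.sum_equiv
          ⟨fun x => ((x.1, x.2.2.1, x.2.2.2.2.1), (x.2.1, x.2.2.2.1, x.2.2.2.2.2)),
            fun st => (st.1.1, st.2.1, st.1.2.1, st.2.2.1, st.1.2.2, st.2.2.2),
            fun _ => rfl, fun _ => rfl⟩ _ _ fun _ => rfl
    _ = _ := Fintype.sum_prod_type _

lemma sum_link_self_le (hf₁₃ : ∀ u z, |f₁₃ u z| ≤ 1) (hf₂₃ : ∀ w z, |f₂₃ w z| ≤ 1)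
    (hd₁₂ : |d₁₂| ≤ 1) (hd₁₃ : |d₁₃| ≤ 1) (hη : 0 ≤ η)
    (h₁₂ : boxSum (fun u w => f₁₂ u w - d₁₂)
      ≤ η ^ 4 * (Fintype.card V₁ : ℝ) ^ 2 * (Fintype.card V₂ : ℝ) ^ 2)
    (h₁₃ : boxSum (fun u z => f₁₃ u z - d₁₃)
      ≤ η ^ 4 * (Fintype.card V₁ : ℝ) ^ 2 * (Fintype.card V₃ : ℝ) ^ 2)
    (h₂₃ : boxSum (fun w z => f₂₃ w z - d₂₃)
      ≤ η ^ 4 * (Fintype.card V₂ : ℝ) ^ 2 * (Fintype.card V₃ : ℝ) ^ 2) :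
    ∑ t, link f₁₂ f₁₃ f₂₃ t t
      ≤ (d₁₂ * d₁₃ * d₂₃ + 3 * η)
        * (Fintype.card V₁ * Fintype.card V₂ * Fintype.card V₃ : ℝ) := by
  set Q : ℝ := Fintype.card V₁ * Fintype.card V₂ * Fintype.card V₃
  have hQ : 0 ≤ Q := by positivity
  have e₁₂ : ∑ t : V₁ × V₂ × V₃, (f₁₂ t.1 t.2.1 - d₁₂) * f₁₃ t.1 t.2.2 * f₂₃ t.2.1 t.2.2
      ≤ η * Q :=
    sum_mul_mul_le_of_boxSum_le
      ⟨fun x => (x.2.1, x.2.2, x.1), fun t => (t.2.2, t.1, t.2.1), fun _ => rfl, fun _ => rfl⟩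
      _ (fun z u => f₁₃ u z) (fun _ _ => 1) (fun z w => f₂₃ w z) (fun _ _ => 1) _
      (fun _ _ _ => by simp only [Equiv.coe_fn_mk]; ring)
      (fun _ _ => (sq_le_one_iff_abs_le_one _).mpr (hf₁₃ _ _))
      (fun _ _ => (sq_le_one_iff_abs_le_one _).mpr (hf₂₃ _ _)) h₁₂ hη hQ
      (by simp only [Finset.sum_const, Finset.card_univ, nsmul_eq_mul, mul_one, Q]; ring_nf; rfl)
  have e₁₃ : ∑ t : V₁ × V₂ × V₃, d₁₂ * (f₁₃ t.1 t.2.2 - d₁₃) * f₂₃ t.2.1 t.2.2 ≤ η * Q :=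
    sum_mul_mul_le_of_boxSum_le
      ⟨fun x => (x.2.1, x.1, x.2.2), fun t => (t.2.1, t.1, t.2.2), fun _ => rfl, fun _ => rfl⟩
      _ (fun _ _ => d₁₂) (fun _ _ => 1) (fun w z => f₂₃ w z) (fun _ _ => 1) _
      (fun _ _ _ => by simp only [Equiv.coe_fn_mk]; ring)
      (fun _ _ => (sq_le_one_iff_abs_le_one _).mpr hd₁₂)
      (fun _ _ => (sq_le_one_iff_abs_le_one _).mpr (hf₂₃ _ _)) h₁₃ hη hQ
      (by simp only [Finset.sum_const, Finset.card_univ, nsmul_eq_mul, mul_one, Q]; ring_nf; rfl)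
  have e₂₃ : ∑ t : V₁ × V₂ × V₃, d₁₂ * d₁₃ * (f₂₃ t.2.1 t.2.2 - d₂₃) ≤ η * Q :=
    sum_mul_mul_le_of_boxSum_le (Equiv.refl _)
      _ (fun _ _ => d₁₂ * d₁₃) (fun _ _ => 1) (fun _ _ => 1) (fun _ _ => 1) _
      (fun _ _ _ => by simp only [Equiv.refl_apply]; ring)
      (fun _ _ => (sq_le_one_iff_abs_le_one _).mpr (by rw [abs_mul]; bound))
      (fun _ _ => by norm_num) h₂₃ hη hQ
      (by simp only [Finset.sum_const, Finset.card_univ, nsmul_eq_mul, mul_one, Q]; ring_nf; rfl)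
  have hsplit : ∑ t, link f₁₂ f₁₃ f₂₃ t t
      = d₁₂ * d₁₃ * d₂₃ * Q
        + (∑ t : V₁ × V₂ × V₃, (f₁₂ t.1 t.2.1 - d₁₂) * f₁₃ t.1 t.2.2 * f₂₃ t.2.1 t.2.2
        + ∑ t : V₁ × V₂ × V₃, d₁₂ * (f₁₃ t.1 t.2.2 - d₁₃) * f₂₃ t.2.1 t.2.2
        + ∑ t : V₁ × V₂ × V₃, d₁₂ * d₁₃ * (f₂₃ t.2.1 t.2.2 - d₂₃)) := by
    have hpt : ∀ t : V₁ × V₂ × V₃, link f₁₂ f₁₃ f₂₃ t t = d₁₂ * d₁₃ * d₂₃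
        + ((f₁₂ t.1 t.2.1 - d₁₂) * f₁₃ t.1 t.2.2 * f₂₃ t.2.1 t.2.2
          + d₁₂ * (f₁₃ t.1 t.2.2 - d₁₃) * f₂₃ t.2.1 t.2.2
          + d₁₂ * d₁₃ * (f₂₃ t.2.1 t.2.2 - d₂₃)) := fun t => by unfold link; ring
    simp only [hpt, Finset.sum_add_distrib, Finset.sum_const, Finset.card_univ, Fintype.card_prod,
      nsmul_eq_mul, Q]
    push_cast
    ring
  linarith

lemma sum_sum_mul_link_sub_le {ρ : V₁ × V₂ × V₃ → ℝ}
    {c₁₂ : V₁ → V₂ → ℝ} {c₁₃ : V₁ → V₃ → ℝ} {c₂₃ : V₂ → V₃ → ℝ}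
    (hρ : ∀ t, 0 ≤ ρ t ∧ ρ t ≤ 1) (hf₁₃ : ∀ u z, |f₁₃ u z| ≤ 1) (hf₂₃ : ∀ w z, |f₂₃ w z| ≤ 1)
    (hc₁₂ : ∀ u w, |c₁₂ u w| ≤ 1) (hc₁₃ : ∀ u z, |c₁₃ u z| ≤ 1) (hc₂₃ : ∀ w z, |c₂₃ w z| ≤ 1)
    (hd₁₂ : |d₁₂| ≤ 1) (hd₁₃ : |d₁₃| ≤ 1) (hη : 0 ≤ η)
    (h₁₂ : boxSum (fun u w => f₁₂ u w - d₁₂)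
      ≤ η ^ 4 * (Fintype.card V₁ : ℝ) ^ 2 * (Fintype.card V₂ : ℝ) ^ 2)
    (h₁₃ : boxSum (fun u z => f₁₃ u z - d₁₃)
      ≤ η ^ 4 * (Fintype.card V₁ : ℝ) ^ 2 * (Fintype.card V₃ : ℝ) ^ 2)
    (h₂₃ : boxSum (fun w z => f₂₃ w z - d₂₃)
      ≤ η ^ 4 * (Fintype.card V₂ : ℝ) ^ 2 * (Fintype.card V₃ : ℝ) ^ 2) :
    ∑ s, ∑ t, ρ s * ρ t * (link f₁₂ f₁₃ f₂₃ s t - d₁₂ * d₁₃ * d₂₃) * link c₁₂ c₁₃ c₂₃ t s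
      ≤ 3 * η * ((∑ t, ρ t) * (Fintype.card V₁ * Fintype.card V₂ * Fintype.card V₃)) := by
  have hRQ : 0 ≤ (∑ t, ρ t) * (Fintype.card V₁ * Fintype.card V₂ * Fintype.card V₃ : ℝ) :=
    mul_nonneg (Finset.sum_nonneg fun t _ => (hρ t).1) (by positivity)
  have e₁₂ : ∑ s, ∑ t, ρ s * ρ t * ((f₁₂ s.1 t.2.1 - d₁₂) * f₁₃ s.1 t.2.2 * f₂₃ s.2.1 t.2.2)
      * link c₁₂ c₁₃ c₂₃ t s
      ≤ η * ((∑ t, ρ t) * (Fintype.card V₁ * Fintype.card V₂ * Fintype.card V₃)) :=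
    sum_sum_mul_mul_le_of_boxSum_le (Equiv.prodComm _ _)
      ⟨fun q => (q.1.1, q.2, q.1.2), fun t => ((t.1, t.2.2), t.2.1), fun _ => rfl, fun _ => rfl⟩
      _ (fun p q x => ρ (x, p) * (f₁₃ x q.2 * f₂₃ p.1 q.2 * c₁₂ q.1 p.1 * c₁₃ q.1 p.2))
      (fun p q y => ρ (q.1, y, q.2) * c₂₃ y p.2) ρ ρ _
      (fun _ _ _ _ => by simp only [Equiv.coe_fn_mk, Equiv.prodComm_apply, Prod.swap, link]; ring)
      (fun p q x => sq_mul_le_of_abs_le_one (hρ _) (by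
        simp only [abs_mul]; bound [hf₁₃ x q.2, hf₂₃ p.1 q.2, hc₁₂ q.1 p.1, hc₁₃ q.1 p.2]))
      (fun _ _ _ => sq_mul_le_of_abs_le_one (hρ _) (hc₂₃ _ _)) h₁₂ hη hRQ
      (le_of_eq (by simp only [Fintype.card_prod]; push_cast; ring))
  have e₁₃ : ∑ s, ∑ t, ρ s * ρ t * (d₁₂ * (f₁₃ s.1 t.2.2 - d₁₃) * f₂₃ s.2.1 t.2.2)
      * link c₁₂ c₁₃ c₂₃ t s
      ≤ η * ((∑ t, ρ t) * (Fintype.card V₁ * Fintype.card V₂ * Fintype.card V₃)) :=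
    sum_sum_mul_mul_le_of_boxSum_le (Equiv.prodComm _ _) (Equiv.prodAssoc _ _ _)
      _ (fun p q x => ρ (x, p) * (d₁₂ * c₁₂ q.1 p.1 * c₁₃ q.1 p.2 * c₂₃ q.2 p.2))
      (fun p q y => ρ (q.1, q.2, y) * f₂₃ p.1 y) ρ ρ _
      (fun _ _ _ _ => by
        simp only [Equiv.prodComm_apply, Prod.swap, Equiv.prodAssoc_apply, link]; ring)
      (fun p q x => sq_mul_le_of_abs_le_one (hρ _) (by
        simp only [abs_mul]; bound [hc₁₂ q.1 p.1, hc₁₃ q.1 p.2, hc₂₃ q.2 p.2]))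
      (fun _ _ _ => sq_mul_le_of_abs_le_one (hρ _) (hf₂₃ _ _)) h₁₃ hη hRQ
      (le_of_eq (by simp only [Fintype.card_prod]; push_cast; ring))
  have e₂₃ : ∑ s, ∑ t, ρ s * ρ t * (d₁₂ * d₁₃ * (f₂₃ s.2.1 t.2.2 - d₂₃))
      * link c₁₂ c₁₃ c₂₃ t s
      ≤ η * ((∑ t, ρ t) * (Fintype.card V₁ * Fintype.card V₂ * Fintype.card V₃)) :=
    sum_sum_mul_mul_le_of_boxSum_le
      ⟨fun p => (p.1.1, p.2, p.1.2), fun s => ((s.1, s.2.2), s.2.1), fun _ => rfl, fun _ => rfl⟩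
      (Equiv.prodAssoc _ _ _)
      _ (fun p q x => ρ (p.1, x, p.2) * (d₁₂ * d₁₃ * c₁₂ q.1 x * c₁₃ q.1 p.2 * c₂₃ q.2 p.2))
      (fun _ q y => ρ (q.1, q.2, y)) ρ ρ _
      (fun _ _ _ _ => by simp only [Equiv.coe_fn_mk, Equiv.prodAssoc_apply, link]; ring)
      (fun p q x => sq_mul_le_of_abs_le_one (hρ _) (by
        simp only [abs_mul]; bound [hc₁₂ q.1 x, hc₁₃ q.1 p.2, hc₂₃ q.2 p.2]))
      (fun _ _ _ => pow_le_of_le_one (hρ _).1 (hρ _).2 two_ne_zero) h₂₃ hη hRQ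
      (le_of_eq (by simp only [Fintype.card_prod]; push_cast; ring))
  have hsplit : ∀ s t, ρ s * ρ t * (link f₁₂ f₁₃ f₂₃ s t - d₁₂ * d₁₃ * d₂₃) * link c₁₂ c₁₃ c₂₃ t s
      = ρ s * ρ t * ((f₁₂ s.1 t.2.1 - d₁₂) * f₁₃ s.1 t.2.2 * f₂₃ s.2.1 t.2.2)
          * link c₁₂ c₁₃ c₂₃ t s
        + ρ s * ρ t * (d₁₂ * (f₁₃ s.1 t.2.2 - d₁₃) * f₂₃ s.2.1 t.2.2) * link c₁₂ c₁₃ c₂₃ t s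
        + ρ s * ρ t * (d₁₂ * d₁₃ * (f₂₃ s.2.1 t.2.2 - d₂₃)) * link c₁₂ c₁₃ c₂₃ t s := by
    intro s t; unfold link; ring
  simp only [hsplit, Finset.sum_add_distrib]
  linarith

lemma sum_sum_mul_link_mul_link_le {ρ : V₁ × V₂ × V₃ → ℝ}
    (hρ : ∀ t, 0 ≤ ρ t ∧ ρ t ≤ 1) (hf₁₂ : ∀ u w, |f₁₂ u w| ≤ 1) (hf₁₃ : ∀ u z, |f₁₃ u z| ≤ 1)
    (hf₂₃ : ∀ w z, |f₂₃ w z| ≤ 1) (hd₁₂ : 0 ≤ d₁₂ ∧ d₁₂ ≤ 1) (hd₁₃ : 0 ≤ d₁₃ ∧ d₁₃ ≤ 1)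
    (hd₂₃ : 0 ≤ d₂₃ ∧ d₂₃ ≤ 1) (hη : 0 ≤ η)
    (h₁₂ : boxSum (fun u w => f₁₂ u w - d₁₂)
      ≤ η ^ 4 * (Fintype.card V₁ : ℝ) ^ 2 * (Fintype.card V₂ : ℝ) ^ 2)
    (h₁₃ : boxSum (fun u z => f₁₃ u z - d₁₃)
      ≤ η ^ 4 * (Fintype.card V₁ : ℝ) ^ 2 * (Fintype.card V₃ : ℝ) ^ 2)
    (h₂₃ : boxSum (fun w z => f₂₃ w z - d₂₃)
      ≤ η ^ 4 * (Fintype.card V₂ : ℝ) ^ 2 * (Fintype.card V₃ : ℝ) ^ 2) :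
    ∑ s, ∑ t, ρ s * ρ t * (link f₁₂ f₁₃ f₂₃ s t * link f₁₂ f₁₃ f₂₃ t s)
      ≤ (d₁₂ * d₁₃ * d₂₃) ^ 2 * (∑ t, ρ t) ^ 2
        + 6 * η * ((∑ t, ρ t) * (Fintype.card V₁ * Fintype.card V₂ * Fintype.card V₃)) := by
  set p := d₁₂ * d₁₃ * d₂₃
  set L := link f₁₂ f₁₃ f₂₃
  have hp : 0 ≤ p ∧ p ≤ 1 := ⟨mul_nonneg (mul_nonneg hd₁₂.1 hd₁₃.1) hd₂₃.1, by bound⟩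
  have habs : ∀ {d : ℝ}, 0 ≤ d ∧ d ≤ 1 → |d| ≤ 1 := fun hd => abs_le.mpr ⟨by linarith, hd.2⟩
  have hE := sum_sum_mul_link_sub_le (d₂₃ := d₂₃) hρ hf₁₃ hf₂₃ hf₁₂ hf₁₃ hf₂₃ (habs hd₁₂)
    (habs hd₁₃) hη h₁₂ h₁₃ h₂₃
  have hE₁ := sum_sum_mul_link_sub_le (d₂₃ := d₂₃) (c₁₂ := fun _ _ => 1) (c₁₃ := fun _ _ => 1)
    (c₂₃ := fun _ _ => 1) hρ hf₁₃ hf₂₃ (by simp) (by simp) (by simp) (habs hd₁₂) (habs hd₁₃)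
    hη h₁₂ h₁₃ h₂₃
  have hRQ : 0 ≤ (∑ t, ρ t) * (Fintype.card V₁ * Fintype.card V₂ * Fintype.card V₃ : ℝ) :=
    mul_nonneg (Finset.sum_nonneg fun t _ => (hρ t).1) (by positivity)
  -- swapping `s` and `t`, only the three edges of `link f s t` need to be replaced by densities
  have hswap : ∑ s, ∑ t, ρ s * ρ t * L t s = ∑ s, ∑ t, ρ s * ρ t * L s t := by
    rw [Finset.sum_comm]
    exact Finset.sum_congr rfl fun _ _ => Finset.sum_congr rfl fun _ _ => by ring
  have hsplit : ∑ s, ∑ t, ρ s * ρ t * (L s t * L t s)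
      = ∑ s, ∑ t, ρ s * ρ t * (L s t - p) * L t s + p * ∑ s, ∑ t, ρ s * ρ t * L t s := by
    simp only [Finset.mul_sum, ← Finset.sum_add_distrib]
    exact Finset.sum_congr rfl fun _ _ => Finset.sum_congr rfl fun _ _ => by ring
  have hsplit₁ : ∑ s, ∑ t, ρ s * ρ t * L t s
      = ∑ s, ∑ t, ρ s * ρ t * (L s t - p) * link (fun _ _ => 1) (fun _ _ => 1) (fun _ _ => 1) t s
        + p * (∑ t, ρ t) ^ 2 := by
    rw [hswap, sq, Finset.sum_mul_sum, Finset.mul_sum]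
    simp only [Finset.mul_sum, ← Finset.sum_add_distrib]
    exact Finset.sum_congr rfl fun _ _ => Finset.sum_congr rfl fun _ _ => by simp only [link]; ring
  rw [hsplit, hsplit₁]
  nlinarith [mul_le_mul_of_nonneg_left hE₁ hp.1,
    mul_le_mul_of_nonneg_right hp.2 (mul_nonneg hη hRQ)]

end Counting

lemma prod_le_mul_prod_add_prod {ι : Type*} (I : Finset ι) {ε : ℝ} (hε : 0 ≤ ε)
    (h τ r : ι → ℝ) (habs : ∀ i ∈ I, |h i| ≤ τ i)
    (hcases : ∀ i ∈ I, (r i = 1 ∧ 0 ≤ h i ∧ h i ≤ 1) ∨ (r i = 0 ∧ |h i| ≤ ε * τ i)) :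
    ∏ i ∈ I, h i ≤ ε * ∏ i ∈ I, τ i + ∏ i ∈ I, r i := by
  have hτ : ∀ i ∈ I, 0 ≤ τ i := fun i hi => (abs_nonneg _).trans (habs i hi)
  by_cases hall : ∀ i ∈ I, r i = 1
  · have hh : ∀ i ∈ I, 0 ≤ h i ∧ h i ≤ 1 := fun i hi =>
      ((hcases i hi).resolve_right fun h0 => by simp [hall i hi] at h0).2
    rw [Finset.prod_eq_one hall]
    have := Finset.prod_le_one (fun i hi => (hh i hi).1) (fun i hi => (hh i hi).2)
    nlinarith [mul_nonneg hε (Finset.prod_nonneg hτ)]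
  · push Not at hall
    obtain ⟨j, hj, hrj⟩ := hall
    obtain ⟨hr, hhj⟩ := (hcases j hj).resolve_left fun h1 => hrj h1.1
    calc ∏ i ∈ I, h i ≤ ∏ i ∈ I, |h i| := (le_abs_self _).trans (Finset.abs_prod _ _).le
      _ = |h j| * ∏ i ∈ I.erase j, |h i| := (Finset.mul_prod_erase _ _ hj).symm
      _ ≤ (ε * τ j) * ∏ i ∈ I.erase j, τ i :=
          mul_le_mul hhj (Finset.prod_le_prod (fun _ _ => abs_nonneg _)
            fun i hi => habs i (Finset.mem_of_mem_erase hi))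
            (Finset.prod_nonneg fun _ _ => abs_nonneg _) (mul_nonneg hε (hτ j hj))
      _ = ε * ∏ i ∈ I, τ i + ∏ i ∈ I, r i := by
          rw [mul_assoc, Finset.mul_prod_erase _ _ hj, Finset.prod_eq_zero hj hr, add_zero]

noncomputable def ind {γ : Type*} (S : Finset γ) (x : γ) : ℝ := if x ∈ S then 1 else 0

section Indicator

variable {γ : Type*} (S : Finset γ) (x : γ)

lemma ind_nonneg : 0 ≤ ind S x := by unfold ind; split_ifs <;> norm_num

lemma ind_le_one : ind S x ≤ 1 := by unfold ind; split_ifs <;> norm_num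

lemma abs_ind_le_one : |ind S x| ≤ 1 := abs_le.mpr ⟨by linarith [ind_nonneg S x], ind_le_one S x⟩

lemma sum_ind [Fintype γ] : ∑ y, ind S y = S.card := by
  simp [ind]

end Indicator

section Bipartite

variable {α β : Type*} [Fintype α] [Fintype β] (E : Finset (α × β))

lemma density_nonneg : 0 ≤ density E := by unfold density; positivity

lemma density_le_one : density E ≤ 1 := by
  unfold density
  refine div_le_one_of_le₀ ?_ (by positivity)
  exact_mod_cast (Finset.card_le_univ E).trans_eq (Fintype.card_prod α β)

lemma abs_density_le_one : |density E| ≤ 1 :=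
  abs_le.mpr ⟨by linarith [density_nonneg E], density_le_one E⟩

variable [DecidableEq α] [DecidableEq β] {E} {δ d : ℝ}

lemma gfun_eq_ind_sub_density : gfun E = fun a b => ind E (a, b) - density E := by
  ext a b; unfold gfun ind; split_ifs <;> ring

lemma boxSum_ind_sub_density_le {η : ℝ} (h : dev2 E δ d) (hδη : δ ≤ η ^ 4) :
    boxSum (fun a b => ind E (a, b) - density E)
      ≤ η ^ 4 * (Fintype.card α : ℝ) ^ 2 * (Fintype.card β : ℝ) ^ 2 := by
  rw [← gfun_eq_ind_sub_density]
  exact h.2.trans (by gcongr)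

lemma density_le_of_dev2 (h : dev2 E δ d) (hd : 0 < d) (hδ : δ ≤ (d / 2) ^ 48) :
    density E ≤ 21 / 20 * d := by
  have hEd := (abs_lt.mp h.1).2
  rcases le_or_gt 1 d with hd1 | hd1
  · linarith [density_le_one E]
  · have : (d / 2) ^ 48 ≤ d / 2 ^ 48 := by
      rw [div_pow]
      gcongr
      exact pow_le_of_le_one hd.le hd1.le (by norm_num)
    linarith

end Bipartite

section Tripartite

variable {V₁ V₂ V₃ : Type*} [DecidableEq V₁] [DecidableEq V₂] [DecidableEq V₃]

lemma hfun_cases {RT T : Finset (V₁ × V₂ × V₃)} (hRT : RT ⊆ T) {d₃ ε : ℝ} (hd₃ : 0 ≤ d₃)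
    (hd₃ε : d₃ ≤ ε) (hε : ε ≤ 1) (x : V₁ × V₂ × V₃) :
    |hfun RT T d₃ x.1 x.2.1 x.2.2| ≤ ind T x
      ∧ ((ind RT x = 1 ∧ 0 ≤ hfun RT T d₃ x.1 x.2.1 x.2.2 ∧ hfun RT T d₃ x.1 x.2.1 x.2.2 ≤ 1)
        ∨ (ind RT x = 0 ∧ |hfun RT T d₃ x.1 x.2.1 x.2.2| ≤ ε * ind T x)) := by
  simp only [hfun, ind, Prod.mk.eta]
  by_cases hR : x ∈ RT
  · simp only [hR, hRT hR, if_true, true_and, one_ne_zero, false_and, or_false]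
    exact ⟨abs_le.mpr ⟨by linarith, by linarith⟩, by linarith, by linarith⟩
  · by_cases hT : x ∈ T
    · simp only [hR, hT, if_true, if_false, abs_neg, abs_of_nonneg hd₃, mul_one]
      exact ⟨by linarith, Or.inr ⟨trivial, hd₃ε⟩⟩
    · simp [hR, hT]

noncomputable abbrev edgeLink (E12 : Finset (V₁ × V₂)) (E13 : Finset (V₁ × V₃))
    (E23 : Finset (V₂ × V₃)) : V₁ × V₂ × V₃ → V₁ × V₂ × V₃ → ℝ :=
  link (fun u w => ind E12 (u, w)) (fun u z => ind E13 (u, z)) (fun w z => ind E23 (w, z))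

variable [Fintype V₁] [Fintype V₂] [Fintype V₃]
  {E12 : Finset (V₁ × V₂)} {E13 : Finset (V₁ × V₃)} {E23 : Finset (V₂ × V₃)} {δ d η : ℝ}

lemma ind_triangles (t : V₁ × V₂ × V₃) :
    ind (triangles E12 E13 E23) t = edgeLink E12 E13 E23 t t := by
  simp only [ind, edgeLink, link, triangles, Finset.mem_filter, Finset.mem_univ, true_and]
  split_ifs <;> simp_all

lemma ind_le_of_subset_triangles {S : Finset (V₁ × V₂ × V₃)} (hS : S ⊆ triangles E12 E13 E23)
    (t : V₁ × V₂ × V₃) :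
    ind S t ≤ ind E12 (t.1, t.2.1) ∧ ind S t ≤ ind E13 (t.1, t.2.2)
      ∧ ind S t ≤ ind E23 (t.2.1, t.2.2) := by
  by_cases ht : t ∈ S
  · have := hS ht
    simp only [triangles, Finset.mem_filter, Finset.mem_univ, true_and] at this
    simp [ind, ht, this]
  · simp only [ind, ht, if_false]
    exact ⟨ind_nonneg _ _, ind_nonneg _ _, ind_nonneg _ _⟩

lemma prod_hfun_le {RT T : Finset (V₁ × V₂ × V₃)} (hRT : RT ⊆ T)
    (hT : T ⊆ triangles E12 E13 E23) {d₃ ε : ℝ} (hd₃ : 0 ≤ d₃) (hd₃ε : d₃ ≤ ε) (hε : ε ≤ 1)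
    (s t : V₁ × V₂ × V₃) :
    hfun RT T d₃ s.1 s.2.1 s.2.2 * hfun RT T d₃ s.1 s.2.1 t.2.2 *
        hfun RT T d₃ s.1 t.2.1 s.2.2 * hfun RT T d₃ s.1 t.2.1 t.2.2 *
        hfun RT T d₃ t.1 s.2.1 s.2.2 * hfun RT T d₃ t.1 s.2.1 t.2.2 *
        hfun RT T d₃ t.1 t.2.1 s.2.2 * hfun RT T d₃ t.1 t.2.1 t.2.2
      ≤ ε * (ind T s * ind T t * (edgeLink E12 E13 E23 s t * edgeLink E12 E13 E23 t s))
        + ind RT s * ind RT t * (edgeLink E12 E13 E23 s t * edgeLink E12 E13 E23 t s) := by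
  have hε0 : 0 ≤ ε := hd₃.trans hd₃ε
  have hprod := prod_le_mul_prod_add_prod Finset.univ hε0
    (fun i => hfun RT T d₃ (corner s t i).1 (corner s t i).2.1 (corner s t i).2.2)
    (fun i => ind T (corner s t i)) (fun i => ind RT (corner s t i))
    (fun i _ => (hfun_cases hRT hd₃ hd₃ε hε _).1) (fun i _ => (hfun_cases hRT hd₃ hd₃ε hε _).2)
  have hτ := prod_corner_le (f₁₂ := fun u w => ind E12 (u, w)) (f₁₃ := fun u z => ind E13 (u, z))
    (f₂₃ := fun w z => ind E23 (w, z)) (ind_nonneg T) (fun x => (ind_le_of_subset_triangles hT x).1)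
    (fun x => (ind_le_of_subset_triangles hT x).2.1)
    (fun x => (ind_le_of_subset_triangles hT x).2.2) s t
  have hr := prod_corner_le (f₁₂ := fun u w => ind E12 (u, w)) (f₁₃ := fun u z => ind E13 (u, z))
    (f₂₃ := fun w z => ind E23 (w, z)) (ind_nonneg RT)
    (fun x => (ind_le_of_subset_triangles (hRT.trans hT) x).1)
    (fun x => (ind_le_of_subset_triangles (hRT.trans hT) x).2.1)
    (fun x => (ind_le_of_subset_triangles (hRT.trans hT) x).2.2) s t
  refine le_trans (le_of_eq ?_) (hprod.trans (add_le_add (mul_le_mul_of_nonneg_left hτ hε0) hr))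
  simp [Fin.prod_univ_eight, corner]

lemma density_mul_le_of_dev2 (h12 : dev2 E12 δ d) (h13 : dev2 E13 δ d) (h23 : dev2 E23 δ d)
    (hd : 0 < d) (hδ : δ ≤ (d / 2) ^ 48) :
    density E12 * density E13 * density E23 ≤ (21 / 20 * d) ^ 3 := by
  rw [pow_three, ← mul_assoc]
  exact mul_le_mul (mul_le_mul (density_le_of_dev2 h12 hd hδ) (density_le_of_dev2 h13 hd hδ)
    (density_nonneg _) (by positivity)) (density_le_of_dev2 h23 hd hδ) (density_nonneg _)
    (by positivity)

lemma card_triangles_le (h12 : dev2 E12 δ d) (h13 : dev2 E13 δ d) (h23 : dev2 E23 δ d)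
    (hδη : δ ≤ η ^ 4) (hη : 0 ≤ η) :
    ((triangles E12 E13 E23).card : ℝ)
      ≤ (density E12 * density E13 * density E23 + 3 * η)
        * (Fintype.card V₁ * Fintype.card V₂ * Fintype.card V₃) := by
  rw [← sum_ind]
  simp only [ind_triangles]
  exact sum_link_self_le (fun _ _ => abs_ind_le_one _ _) (fun _ _ => abs_ind_le_one _ _)
    (abs_density_le_one E12) (abs_density_le_one E13) hη
    (boxSum_ind_sub_density_le h12 hδη) (boxSum_ind_sub_density_le h13 hδη)
    (boxSum_ind_sub_density_le h23 hδη)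

lemma sum_sum_ind_mul_edgeLink_le (h12 : dev2 E12 δ d) (h13 : dev2 E13 δ d)
    (h23 : dev2 E23 δ d) (hδη : δ ≤ η ^ 4) (hη : 0 ≤ η) (S : Finset (V₁ × V₂ × V₃)) :
    ∑ s, ∑ t, ind S s * ind S t * (edgeLink E12 E13 E23 s t * edgeLink E12 E13 E23 t s)
      ≤ (density E12 * density E13 * density E23) ^ 2 * (S.card : ℝ) ^ 2
        + 6 * η * (S.card * (Fintype.card V₁ * Fintype.card V₂ * Fintype.card V₃)) := by
  rw [← sum_ind]
  exact sum_sum_mul_link_mul_link_le (fun t => ⟨ind_nonneg S t, ind_le_one S t⟩)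
    (fun _ _ => abs_ind_le_one _ _) (fun _ _ => abs_ind_le_one _ _)
    (fun _ _ => abs_ind_le_one _ _) ⟨density_nonneg E12, density_le_one E12⟩
    ⟨density_nonneg E13, density_le_one E13⟩ ⟨density_nonneg E23, density_le_one E23⟩ hη
    (boxSum_ind_sub_density_le h12 hδη) (boxSum_ind_sub_density_le h13 hδη)
    (boxSum_ind_sub_density_le h23 hδη)

end Tripartite

lemma deviation_sum_bound_arith {ε d p η T R Q : ℝ} (hε : 0 ≤ ε) (hε1 : ε ≤ 1) (hd : 0 < d)
    (hη : η = (d / 2) ^ 12) (hp0 : 0 ≤ p) (hp : p ≤ (21 / 20 * d) ^ 3) (hT0 : 0 ≤ T)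
    (hTQ : T ≤ Q) (hT : T ≤ (p + 3 * η) * Q) (hR0 : 0 ≤ R) (hR : R ≤ ε * T) :
    ε * (p ^ 2 * T ^ 2 + 6 * η * (T * Q)) + (p ^ 2 * R ^ 2 + 6 * η * (R * Q))
      ≤ 6 * ε * d ^ 12 * Q ^ 2 := by
  have hQ : 0 ≤ Q := hT0.trans hTQ
  have hη0 : 0 ≤ η := hη ▸ by positivity
  have hTd : T ≤ 6 / 5 * d ^ 3 * Q := by
    rcases le_or_gt 1 d with hd1 | hd1
    · nlinarith [one_le_pow₀ (n := 3) hd1]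
    · have h12 : d ^ 12 ≤ d ^ 3 := pow_le_pow_of_le_one hd.le hd1.le (by norm_num)
      have : p + 3 * η ≤ 6 / 5 * d ^ 3 := by
        rw [hη, div_pow]; nlinarith [pow_pos hd 3]
      nlinarith
  have hpT : (p * T) ^ 2 ≤ ((21 / 20 * d) ^ 3 * (6 / 5 * d ^ 3 * Q)) ^ 2 :=
    pow_le_pow_left₀ (mul_nonneg hp0 hT0) (mul_le_mul hp hTd hT0 (by positivity)) 2
  have hTsum : p ^ 2 * T ^ 2 + 6 * η * (T * Q) ≤ 3 * d ^ 12 * Q ^ 2 := by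
    have h1 : p ^ 2 * T ^ 2 ≤ (21 / 20) ^ 6 * (6 / 5) ^ 2 * (d ^ 12 * Q ^ 2) := by
      ring_nf at hpT ⊢; linarith
    have h2 : η * (T * Q) ≤ η * Q ^ 2 := by gcongr; nlinarith
    rw [hη, div_pow] at h2 ⊢
    nlinarith [mul_nonneg (pow_nonneg hd.le 12) (sq_nonneg Q)]
  have hR2 : R ^ 2 ≤ ε * T ^ 2 := by
    nlinarith [mul_le_mul hR hR hR0 (mul_nonneg hε hT0),
      mul_le_mul_of_nonneg_right hε1 (mul_nonneg hε (sq_nonneg T))]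
  have hRQ : η * (R * Q) ≤ ε * (η * (T * Q)) := by nlinarith [mul_nonneg hη0 hQ]
  nlinarith [mul_le_mul_of_nonneg_left hR2 (sq_nonneg p)]

/-- A 3-partite 3-graph whose underlying quasirandom 3-partite graph `G` carries few edges
of `R` satisfies `dev_{2,3}(δ, 6ε)`: there is `d₂` such that each bipartite piece has
`dev₂(δ, d₂)` and the deviation sum is at most `6ε·d₂¹²|V₁|²|V₂|²|V₃|²`. -/
theorem sparse_implies_dev23 :
    ∀ (ε d₂ δ : ℝ), 0 < ε → ε < 1/2 → 0 < d₂ → 0 < δ → δ ≤ (d₂ / 2) ^ 48 →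
    ∃ N : ℕ, ∀ (V₁ V₂ V₃ : Type) [Fintype V₁] [Fintype V₂] [Fintype V₃]
      [DecidableEq V₁] [DecidableEq V₂] [DecidableEq V₃]
      (R : Finset (V₁ × V₂ × V₃))
      (E12 : Finset (V₁ × V₂)) (E13 : Finset (V₁ × V₃)) (E23 : Finset (V₂ × V₃)),
      N ≤ Fintype.card V₁ + Fintype.card V₂ + Fintype.card V₃ →
      |(Fintype.card V₁ : ℝ) - (Fintype.card V₂ : ℝ)|
          ≤ δ * min (Fintype.card V₁ : ℝ) (Fintype.card V₂ : ℝ) →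
      |(Fintype.card V₁ : ℝ) - (Fintype.card V₃ : ℝ)|
          ≤ δ * min (Fintype.card V₁ : ℝ) (Fintype.card V₃ : ℝ) →
      |(Fintype.card V₂ : ℝ) - (Fintype.card V₃ : ℝ)|
          ≤ δ * min (Fintype.card V₂ : ℝ) (Fintype.card V₃ : ℝ) →
      dev2 E12 δ d₂ → dev2 E13 δ d₂ → dev2 E23 δ d₂ →
      ((R ∩ triangles E12 E13 E23).card : ℝ) ≤ ε * ((triangles E12 E13 E23).card : ℝ) →
      ∃ d : ℝ, dev2 E12 δ d ∧ dev2 E13 δ d ∧ dev2 E23 δ d ∧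
        (∑ u₀ : V₁, ∑ u₁ : V₁, ∑ w₀ : V₂, ∑ w₁ : V₂, ∑ z₀ : V₃, ∑ z₁ : V₃,
            hfun (R ∩ triangles E12 E13 E23) (triangles E12 E13 E23)
                (((R ∩ triangles E12 E13 E23).card : ℝ) /
                  ((triangles E12 E13 E23).card : ℝ)) u₀ w₀ z₀ *
            hfun (R ∩ triangles E12 E13 E23) (triangles E12 E13 E23)
                (((R ∩ triangles E12 E13 E23).card : ℝ) /
                  ((triangles E12 E13 E23).card : ℝ)) u₀ w₀ z₁ *
            hfun (R ∩ triangles E12 E13 E23) (triangles E12 E13 E23)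
                (((R ∩ triangles E12 E13 E23).card : ℝ) /
                  ((triangles E12 E13 E23).card : ℝ)) u₀ w₁ z₀ *
            hfun (R ∩ triangles E12 E13 E23) (triangles E12 E13 E23)
                (((R ∩ triangles E12 E13 E23).card : ℝ) /
                  ((triangles E12 E13 E23).card : ℝ)) u₀ w₁ z₁ *
            hfun (R ∩ triangles E12 E13 E23) (triangles E12 E13 E23)
                (((R ∩ triangles E12 E13 E23).card : ℝ) /
                  ((triangles E12 E13 E23).card : ℝ)) u₁ w₀ z₀ *
            hfun (R ∩ triangles E12 E13 E23) (triangles E12 E13 E23)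
                (((R ∩ triangles E12 E13 E23).card : ℝ) /
                  ((triangles E12 E13 E23).card : ℝ)) u₁ w₀ z₁ *
            hfun (R ∩ triangles E12 E13 E23) (triangles E12 E13 E23)
                (((R ∩ triangles E12 E13 E23).card : ℝ) /
                  ((triangles E12 E13 E23).card : ℝ)) u₁ w₁ z₀ *
            hfun (R ∩ triangles E12 E13 E23) (triangles E12 E13 E23)
                (((R ∩ triangles E12 E13 E23).card : ℝ) /
                  ((triangles E12 E13 E23).card : ℝ)) u₁ w₁ z₁)
          ≤ 6 * ε * d ^ 12 * (Fintype.card V₁ : ℝ) ^ 2 * (Fintype.card V₂ : ℝ) ^ 2 *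
              (Fintype.card V₃ : ℝ) ^ 2 := by
  intro ε d₂ δ hε hε2 hd₂ _ hδd
  refine ⟨0, fun V₁ V₂ V₃ _ _ _ _ _ _ R E12 E13 E23 _ _ _ _ h12 h13 h23 hR =>
    ⟨d₂, h12, h13, h23, ?_⟩⟩
  set T := triangles E12 E13 E23
  have hη : 0 ≤ (d₂ / 2) ^ 12 := by positivity
  have hδη : δ ≤ ((d₂ / 2) ^ 12) ^ 4 := by rwa [← pow_mul]
  have hT0 : (0 : ℝ) ≤ T.card := Nat.cast_nonneg _
  have hTQ : (T.card : ℝ) ≤ Fintype.card V₁ * Fintype.card V₂ * Fintype.card V₃ := by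
    exact_mod_cast (Finset.card_le_univ T).trans_eq (by simp [Fintype.card_prod, mul_assoc])
  have hd₃ : ((R ∩ T).card : ℝ) / T.card ≤ ε := div_le_of_le_mul₀ hT0 hε.le hR
  rw [sum_box_eq]
  calc _ ≤ _ := Finset.sum_le_sum fun s _ => Finset.sum_le_sum fun t _ =>
          prod_hfun_le Finset.inter_subset_right subset_rfl (by positivity) hd₃ (by linarith) s t
    _ = _ := by simp only [Finset.sum_add_distrib, Finset.mul_sum]; rfl
    _ ≤ _ := add_le_add
          (mul_le_mul_of_nonneg_left (sum_sum_ind_mul_edgeLink_le h12 h13 h23 hδη hη T) hε.le)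
          (sum_sum_ind_mul_edgeLink_le h12 h13 h23 hδη hη (R ∩ T))
    _ ≤ _ := deviation_sum_bound_arith hε.le (by linarith) hd₂ rfl
          (mul_nonneg (mul_nonneg (density_nonneg _) (density_nonneg _)) (density_nonneg _))
          (density_mul_le_of_dev2 h12 h13 h23 hd₂ hδd) hT0 hTQ
          (card_triangles_le h12 h13 h23 hδη hη) (Nat.cast_nonneg _) hR
    _ = _ := by ring
end

section
/- Let B be a finite set and let R₀, R₁, R₂ partition (a superset of) pairs with elements c₀, c₁ ∈ C and a set B₃ ⊆ B, such that |N_{R₁}(c₁) ∩ N_{R₀}(c₀) ∩ B₃| ≥ (1 − 2√10 δ^{1/64})|B₃| and |B₃| ≥ δ^{1/32}|B|/8 and |N_{R₁}(c₁) Δ N_{R₁}(c₀)| ≤ 2δ^{1/16}|B|. Then, provided δ is small enough that (1 − 2√10 δ^{1/64})δ^{1/32}/8 > 2δ^{1/16}, this is a contradiction: no such configuration exists, since N_{R₁}(c₁) ∩ N_{R₀}(c₀) ⊆ N_{R₁}(c₁) Δ N_{R₁}(c₀). -/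
open Finset

theorem inf_le_symmDiff_of_disjoint {α : Type*} [GeneralizedBooleanAlgebra α] {a b c : α}
    (hbc : Disjoint b c) : a ⊓ c ≤ symmDiff a b := by
  rw [symmDiff_def]
  exact le_sup_of_le_left (le_sdiff.2 ⟨inf_le_left, hbc.symm.mono_left inf_le_right⟩)

theorem mul_lt_mul_of_lt_mul_of_mul_le {R : Type*} [Semiring R] [LinearOrder R]
    [IsStrictOrderedRing R] {a b c e s : R} (he : 0 ≤ e) (hc : 0 ≤ c) (hb : 0 < b)
    (hlt : e < a * c) (hs : c * b ≤ s) : e * b < a * s :=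
  calc e * b < a * c * b := mul_lt_mul_of_pos_right hlt hb
    _ = a * (c * b) := mul_assoc ..
    _ ≤ a * s := mul_le_mul_of_nonneg_left hs (pos_of_mul_pos_left (he.trans_lt hlt) hc).le

theorem no_such_configuration_general (α : Type) [DecidableEq α]
    (B B₃ : Finset α) (hBne : B.Nonempty)
    (N₁c₁ N₁c₀ N₀c₀ : Finset α) (δ : ℝ) (hδ : 0 < δ)
    (hdisj : Disjoint N₁c₀ N₀c₀)
    (h1 : (1 - 2 * Real.sqrt 10 * δ ^ ((1:ℝ)/64)) * (B₃.card : ℝ)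
        ≤ ((N₁c₁ ∩ N₀c₀ ∩ B₃).card : ℝ))
    (h2 : δ ^ ((1:ℝ)/32) * (B.card : ℝ) / 8 ≤ (B₃.card : ℝ))
    (h3 : ((symmDiff N₁c₁ N₁c₀).card : ℝ) ≤ 2 * δ ^ ((1:ℝ)/16) * (B.card : ℝ))
    (hsmall : 2 * δ ^ ((1:ℝ)/16)
        < (1 - 2 * Real.sqrt 10 * δ ^ ((1:ℝ)/64)) * δ ^ ((1:ℝ)/32) / 8) :
    False := by
  have hsub : N₁c₁ ∩ N₀c₀ ∩ B₃ ⊆ symmDiff N₁c₁ N₁c₀ :=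
    inter_subset_left.trans (inf_le_symmDiff_of_disjoint hdisj)
  have hcard : ((N₁c₁ ∩ N₀c₀ ∩ B₃).card : ℝ) ≤ (symmDiff N₁c₁ N₁c₀).card := by
    exact_mod_cast card_le_card hsub
  have hB : (0 : ℝ) < B.card := by exact_mod_cast hBne.card_pos
  have hlt : 2 * δ ^ ((1:ℝ)/16) * B.card < (1 - 2 * Real.sqrt 10 * δ ^ ((1:ℝ)/64)) * B₃.card :=
    mul_lt_mul_of_lt_mul_of_mul_le (c := δ ^ ((1:ℝ)/32) / 8) (by positivity) (by positivity) hB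
      (by rwa [← mul_div_assoc]) (by rwa [div_mul_eq_mul_div])
  linarith

/-- The final contradiction step: since the color classes at `c₀` are disjoint,
`N_{R₁}(c₁) ∩ N_{R₀}(c₀) ⊆ N_{R₁}(c₁) Δ N_{R₁}(c₀)`, and the stated size bounds are
incompatible, so no such configuration exists. -/
theorem no_such_configuration (α : Type) [DecidableEq α]
    (B B₃ : Finset α) (hBne : B.Nonempty) (hB₃ : B₃ ⊆ B)
    (N₁c₁ N₁c₀ N₀c₀ : Finset α) (δ : ℝ) (hδ : 0 < δ)
    (hdisj : Disjoint N₁c₀ N₀c₀)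
    (h1 : (1 - 2 * Real.sqrt 10 * δ ^ ((1:ℝ)/64)) * (B₃.card : ℝ)
        ≤ ((N₁c₁ ∩ N₀c₀ ∩ B₃).card : ℝ))
    (h2 : δ ^ ((1:ℝ)/32) * (B.card : ℝ) / 8 ≤ (B₃.card : ℝ))
    (h3 : ((symmDiff N₁c₁ N₁c₀).card : ℝ) ≤ 2 * δ ^ ((1:ℝ)/16) * (B.card : ℝ))
    (hsmall : 2 * δ ^ ((1:ℝ)/16)
        < (1 - 2 * Real.sqrt 10 * δ ^ ((1:ℝ)/64)) * δ ^ ((1:ℝ)/32) / 8) :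
    False :=
  no_such_configuration_general α B B₃ hBne N₁c₁ N₁c₀ N₀c₀ δ hδ hdisj h1 h2 h3 hsmall
end
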